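/- arXiv:1701.03843 — 9 statements merged into one kernel-verified Lean document; each statement's English description precedes it below -/
import Mathlib

section
/- Let 1 ≤ q < ∞ and n ∈ ℕ. If {x_j}, {y_j}, {z_j} (j = 1,…,n) are positive nonincreasing finite sequences, then (∑_{j=1}^n x_j^q z_j)^{1/q} ≤ (∑_{j=1}^n x_j y_j) · max_{1≤k≤n} (∑_{j=1}^k z_j)^{1/q} (∑_{j=1}^k y_j)^{-1}. -/
open Finset

private lemma abel_id (a Z : ℕ → ℝ) (n : ℕ) :
    ∑ j ∈ range n, a j * (Z (j+1) - Z j)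
      = (∑ k ∈ range n, (a k - a (k+1)) * Z (k+1)) + a n * Z n - a 0 * Z 0 := by
  induction n with
  | zero => simp
  | succ n ih =>
    rw [sum_range_succ, sum_range_succ, ih]; ring

private lemma incr_ineq (q : ℝ) (hq : 1 ≤ q) {b d t : ℝ} (hb : 0 ≤ b) (hbd : b ≤ d)
    (ht : 0 ≤ t) : (b + t) ^ q - b ^ q ≤ (d + t) ^ q - d ^ q := by
  rcases eq_or_lt_of_le ht with rfl | ht
  · simp
  rcases eq_or_lt_of_le hbd with rfl | hbd
  · exact le_refl _
  have hd : (0:ℝ) ≤ d := hb.trans hbd.le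
  have hcx := convexOn_rpow hq
  have hmem : ∀ s : ℝ, 0 ≤ s → s ∈ Set.Ici (0:ℝ) := fun s hs => hs
  have h1 : ((b+t)^q - b^q) / ((b+t) - b) ≤ ((d+t)^q - b^q) / ((d+t) - b) := by
    exact hcx.secant_mono (hmem b hb) (hmem _ (by linarith)) (hmem _ (by linarith))
      (by linarith) (by linarith) (by linarith)
  have h2 : (b^q - (d+t)^q) / (b - (d+t)) ≤ (d^q - (d+t)^q) / (d - (d+t)) := by
    exact hcx.secant_mono (hmem _ (by linarith)) (hmem b hb) (hmem d hd)
      (by linarith) (by linarith) (by linarith)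
  have e1 : ((b+t) - b) = t := by ring
  have e2 : (b^q - (d+t)^q) / (b - (d+t)) = ((d+t)^q - b^q) / ((d+t) - b) := by
    rw [← neg_div_neg_eq]; ring_nf
  have e3 : (d^q - (d+t)^q) / (d - (d+t)) = ((d+t)^q - d^q) / t := by
    rw [← neg_div_neg_eq]; ring_nf
  rw [e1] at h1; rw [e2, e3] at h2
  have := h1.trans h2
  calc (b+t)^q - b^q = ((b+t)^q - b^q)/t * t := by field_simp
    _ ≤ ((d+t)^q - d^q)/t * t := by gcongr
    _ = (d+t)^q - d^q := by field_simp

/-- The auxiliary inequality (Proposition 2.1): for `1 ≤ q < ∞` and positive nonincreasing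
sequences `x, y, z` of length `n`,
`(∑ xⱼ^q zⱼ)^(1/q) ≤ (∑ xⱼ yⱼ) · max_{1≤k≤n} (∑_{j≤k} zⱼ)^(1/q) (∑_{j≤k} yⱼ)⁻¹`. -/
theorem aux_inequality (n : ℕ) (hn : 1 ≤ n) (q : ℝ) (hq : 1 ≤ q)
    (x y z : ℕ → ℝ)
    (hx : ∀ j, j < n → 0 < x j) (hy : ∀ j, j < n → 0 < y j) (hz : ∀ j, j < n → 0 < z j)
    (hxm : ∀ i j, i ≤ j → j < n → x j ≤ x i)
    (hym : ∀ i j, i ≤ j → j < n → y j ≤ y i)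
    (hzm : ∀ i j, i ≤ j → j < n → z j ≤ z i) :
    (∑ j ∈ range n, x j ^ q * z j) ^ (1 / q) ≤
      (∑ j ∈ range n, x j * y j) *
        (Finset.Icc 1 n).sup' (Finset.nonempty_Icc.mpr hn)
          (fun k => (∑ j ∈ range k, z j) ^ (1 / q) * (∑ j ∈ range k, y j)⁻¹) := by
  have hq0 : (0:ℝ) < q := lt_of_lt_of_le one_pos hq
  have hq0' : q ≠ 0 := ne_of_gt hq0
  set Zs : ℕ → ℝ := fun m => ∑ j ∈ range m, z j with hZs
  set Ys : ℕ → ℝ := fun m => ∑ j ∈ range m, y j with hYs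
  set Ts : ℕ → ℝ := fun m => ∑ j ∈ range m, x j * y j with hTs
  set M : ℝ := (Finset.Icc 1 n).sup' (Finset.nonempty_Icc.mpr hn)
      (fun k => Zs k ^ (1 / q) * (Ys k)⁻¹) with hM
  set a : ℕ → ℝ := fun j => if j < n then x j ^ q else 0 with ha
  -- positivity facts
  have hYpos : ∀ k, 1 ≤ k → k ≤ n → 0 < Ys k := fun k h1 h2 =>
    Finset.sum_pos (fun j hj => hy j (lt_of_lt_of_le (mem_range.mp hj) h2))
      (Finset.nonempty_range_iff.mpr (by omega))
  have hZnonneg : ∀ k, k ≤ n → 0 ≤ Zs k := fun k hk =>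
    Finset.sum_nonneg fun j hj => (hz j (lt_of_lt_of_le (mem_range.mp hj) hk)).le
  have hM0 : 0 < M := by
    have h1 : Zs 1 ^ (1/q) * (Ys 1)⁻¹ ≤ M := by
      rw [hM]
      exact Finset.le_sup' (fun k => Zs k ^ (1/q) * (Ys k)⁻¹)
        (Finset.mem_Icc.mpr ⟨le_refl 1, hn⟩)
    refine lt_of_lt_of_le ?_ h1
    have hz0 : 0 < Zs 1 := by simpa [hZs] using hz 0 hn
    have hy0 : 0 < Ys 1 := hYpos 1 le_rfl hn
    positivity
  -- key bound on Z
  have hZk : ∀ k, k < n → Zs (k+1) ≤ (M * Ys (k+1)) ^ q := by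
    intro k hk
    have hmem : k + 1 ∈ Finset.Icc 1 n := Finset.mem_Icc.mpr ⟨by omega, by omega⟩
    have h1 : Zs (k+1) ^ (1/q) * (Ys (k+1))⁻¹ ≤ M := by
      rw [hM]
      exact Finset.le_sup' (fun k => Zs k ^ (1/q) * (Ys k)⁻¹) hmem
    have hYp : 0 < Ys (k+1) := hYpos _ (by omega) (by omega)
    have h2 : Zs (k+1) ^ (1/q) ≤ M * Ys (k+1) := by
      rw [← div_le_iff₀ hYp] at *
      simpa [div_eq_mul_inv] using h1
    calc Zs (k+1) = (Zs (k+1) ^ (1/q)) ^ q := by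
          rw [← Real.rpow_mul (hZnonneg _ (by omega)), one_div_mul_cancel hq0',
            Real.rpow_one]
      _ ≤ (M * Ys (k+1)) ^ q :=
          Real.rpow_le_rpow (Real.rpow_nonneg (hZnonneg _ (by omega)) _) h2 hq0.le
  have hanonneg : ∀ k, 0 ≤ a k := by
    intro k; by_cases h : k < n
    · simp only [ha, if_pos h]; exact (Real.rpow_pos_of_pos (hx k h) q).le
    · simp [ha, if_neg h]
  have hamono : ∀ k, k < n → a (k+1) ≤ a k := by
    intro k hk
    simp only [ha, if_pos hk]
    by_cases h : k + 1 < n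
    · rw [if_pos h]
      exact Real.rpow_le_rpow (hx (k+1) h).le (hxm k (k+1) (by omega) h) hq0.le
    · rw [if_neg h]; exact (Real.rpow_pos_of_pos (hx k hk) q).le
  have han : a n = 0 := by simp [ha]
  -- step 1: Abel for z
  have step1 : ∑ j ∈ range n, x j ^ q * z j
      = ∑ k ∈ range n, (a k - a (k+1)) * Zs (k+1) := by
    have := abel_id a Zs n
    have he : ∑ j ∈ range n, a j * (Zs (j+1) - Zs j) = ∑ j ∈ range n, x j ^ q * z j := by
      refine Finset.sum_congr rfl fun j hj => ?_
      have hj' := mem_range.mp hj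
      simp [ha, if_pos hj', hZs, Finset.sum_range_succ]
    rw [he] at this
    simp only [han, hZs] at this
    simpa using this
  -- step 2: bound each term
  have step2 : ∑ k ∈ range n, (a k - a (k+1)) * Zs (k+1)
      ≤ ∑ k ∈ range n, (a k - a (k+1)) * (M ^ q * Ys (k+1) ^ q) := by
    refine Finset.sum_le_sum fun k hk => ?_
    have hk' := mem_range.mp hk
    have h1 : 0 ≤ a k - a (k+1) := sub_nonneg.mpr (hamono k hk')
    have h2 : Zs (k+1) ≤ M ^ q * Ys (k+1) ^ q := by
      rw [← Real.mul_rpow hM0.le (hYpos _ (by omega) (by omega)).le]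
      exact hZk k hk'
    exact mul_le_mul_of_nonneg_left h2 h1
  -- step 3: reverse Abel for Y^q
  have step3 : ∑ k ∈ range n, (a k - a (k+1)) * (M ^ q * Ys (k+1) ^ q)
      = M ^ q * ∑ j ∈ range n, a j * (Ys (j+1) ^ q - Ys j ^ q) := by
    have := abel_id a (fun m => Ys m ^ q) n
    have hY0 : Ys 0 ^ q = 0 := by
      simp [hYs, Real.zero_rpow hq0']
    rw [han, hY0] at this
    simp only [zero_mul, mul_zero, add_zero, sub_zero] at this
    rw [this, Finset.mul_sum]
    refine Finset.sum_congr rfl fun k _ => ?_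
    ring
  -- step 4: the inner sum is at most (Ts n)^q
  have step4 : ∀ m, m ≤ n → ∑ j ∈ range m, a j * (Ys (j+1) ^ q - Ys j ^ q) ≤ Ts m ^ q := by
    intro m
    induction m with
    | zero => intro _; simp [hTs, Real.zero_rpow hq0']
    | succ m ih =>
      intro hm
      have hmn : m < n := by omega
      rw [Finset.sum_range_succ]
      have hx0 : 0 < x m := hx m hmn
      have hYm : 0 ≤ Ys m := Finset.sum_nonneg fun j hj =>
        (hy j (lt_of_lt_of_le (mem_range.mp hj) (by omega))).le
      have hbd : x m * Ys m ≤ Ts m := by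
        rw [hTs, hYs, Finset.mul_sum]
        refine Finset.sum_le_sum fun j hj => ?_
        have hj' := mem_range.mp hj
        exact mul_le_mul_of_nonneg_right (hxm j m (by omega) hmn)
          (hy j (by omega)).le
      have key := incr_ineq q hq (b := x m * Ys m) (d := Ts m) (t := x m * y m)
        (mul_nonneg hx0.le hYm) hbd (mul_nonneg hx0.le (hy m hmn).le)
      have hTsucc : Ts (m+1) = Ts m + x m * y m := by
        simp [hTs, Finset.sum_range_succ]
      have hYsucc : Ys (m+1) = Ys m + y m := by
        simp [hYs, Finset.sum_range_succ]
      have hterm : a m * (Ys (m+1) ^ q - Ys m ^ q)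
          = (x m * Ys m + x m * y m) ^ q - (x m * Ys m) ^ q := by
        rw [ha]
        simp only [if_pos hmn]
        rw [hYsucc, mul_sub, ← Real.mul_rpow hx0.le (add_nonneg hYm (hy m hmn).le),
          ← Real.mul_rpow hx0.le hYm, mul_add]
      rw [hterm, hTsucc]
      have := ih (by omega)
      linarith [key]
  -- combine
  have hTn : 0 < Ts n := Finset.sum_pos
    (fun j hj => mul_pos (hx j (mem_range.mp hj)) (hy j (mem_range.mp hj)))
    (Finset.nonempty_range_iff.mpr (by omega))
  have hS : ∑ j ∈ range n, x j ^ q * z j ≤ (Ts n * M) ^ q := by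
    rw [Real.mul_rpow hTn.le hM0.le]
    calc ∑ j ∈ range n, x j ^ q * z j
        ≤ M ^ q * ∑ j ∈ range n, a j * (Ys (j+1) ^ q - Ys j ^ q) := by
          rw [step1]; exact step2.trans (le_of_eq step3)
      _ ≤ M ^ q * Ts n ^ q := by
          refine mul_le_mul_of_nonneg_left (step4 n le_rfl) ?_
          positivity
      _ = Ts n ^ q * M ^ q := by ring
  have hSnonneg : 0 ≤ ∑ j ∈ range n, x j ^ q * z j :=
    Finset.sum_nonneg fun j hj => by
      have := hx j (mem_range.mp hj); have := hz j (mem_range.mp hj); positivity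
  show (∑ j ∈ range n, x j ^ q * z j) ^ (1/q) ≤ Ts n * M
  calc (∑ j ∈ range n, x j ^ q * z j) ^ (1/q)
      ≤ ((Ts n * M) ^ q) ^ (1/q) :=
        Real.rpow_le_rpow hSnonneg hS (by positivity)
    _ = Ts n * M := by
        rw [← Real.rpow_mul (by positivity), mul_one_div_cancel hq0', Real.rpow_one]
end

section
/- If f ∈ ΛBV (i.e., f has finite Λ-variation V_Λ(f) = sup ∑_j |f(I_j)|/λ_j over finite collections of nonoverlapping subintervals of [0,1]), then the modulus of variation of f satisfies ν_f(n) ≤ V_Λ(f) · n / Λ(n) for all n ≥ 1, where Λ(n) = ∑_{j=1}^n 1/λ_j. In other words, ΛBV ⊆ V[nΛ(n)^{-1}]. -/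
open Finset Filter

/-- `ΛBV ⊆ V[nΛ(n)⁻¹]`: if `Λ = {λⱼ}` is a Waterman sequence and `f : [0,1] → ℝ` has
`Λ`-variation at most `V` (i.e. every finite collection of nonoverlapping subintervals
`{Iⱼ}` of `[0,1]` satisfies `∑ |f(Iⱼ)|/λⱼ ≤ V`), then the modulus of variation satisfies
`ν_f(n) ≤ V · n / Λ(n)` for all `n ≥ 1`, where `Λ(n) = ∑_{j=1}^n 1/λⱼ`. -/
theorem LambdaBV_subset_modulus_class (lam : ℕ → ℝ)
    (hlam : ∀ j, 0 < lam j) (hlammono : Monotone lam)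
    (hdiv : Tendsto (fun n => ∑ j ∈ range n, 1 / lam j) atTop atTop)
    (f : ℝ → ℝ) (V : ℝ)
    (hV : ∀ (s : ℕ) (u v : Fin s → ℝ),
      (∀ j, 0 ≤ u j ∧ u j < v j ∧ v j ≤ 1) →
      (∀ i j, i ≠ j → Set.Ioo (u i) (v i) ∩ Set.Ioo (u j) (v j) = ∅) →
      ∑ j, |f (v j) - f (u j)| / lam (j : ℕ) ≤ V) :
    ∀ n : ℕ, 1 ≤ n → ∀ (u v : Fin n → ℝ),
      (∀ j, 0 ≤ u j ∧ u j < v j ∧ v j ≤ 1) →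
      (∀ i j, i ≠ j → Set.Ioo (u i) (v i) ∩ Set.Ioo (u j) (v j) = ∅) →
      ∑ j, |f (v j) - f (u j)| ≤ V * n / (∑ j ∈ range n, 1 / lam j) := by
  intro n hn u v huv hdisj
  haveI : NeZero n := ⟨by omega⟩
  set a : Fin n → ℝ := fun i => |f (v i) - f (u i)| with ha
  set L : ℝ := ∑ j ∈ range n, 1 / lam j with hL
  have hLpos : 0 < L := by
    rw [hL]
    exact Finset.sum_pos (fun j _ => one_div_pos.mpr (hlam j)) (nonempty_range_iff.mpr (by omega))
  rw [le_div_iff₀ hLpos]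
  -- For each cyclic shift k, apply hV
  have h1 : ∀ k : Fin n, ∑ j : Fin n, a (j + k) / lam (j : ℕ) ≤ V := by
    intro k
    refine hV n (fun j => u (j + k)) (fun j => v (j + k)) (fun j => huv _) ?_
    intro i j hij
    exact hdisj _ _ (fun h => hij (add_right_cancel h))
  have h2 : ∑ k : Fin n, ∑ j : Fin n, a (j + k) / lam (j : ℕ) ≤ (n : ℝ) * V := by
    calc ∑ k : Fin n, ∑ j : Fin n, a (j + k) / lam (j : ℕ)
        ≤ ∑ _k : Fin n, V := Finset.sum_le_sum (fun k _ => h1 k)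
      _ = (n : ℝ) * V := by simp [mul_comm]
  have h3 : ∑ k : Fin n, ∑ j : Fin n, a (j + k) / lam (j : ℕ)
      = (∑ i, a i) * L := by
    rw [Finset.sum_comm]
    have : ∀ j : Fin n, ∑ k : Fin n, a (j + k) / lam (j : ℕ)
        = (∑ i, a i) * (1 / lam (j : ℕ)) := by
      intro j
      rw [← Finset.sum_div]
      have : ∑ k : Fin n, a (j + k) = ∑ i, a i :=
        Fintype.sum_equiv (Equiv.addLeft j) _ _ (fun k => rfl)
      rw [this]; ring
    rw [Finset.sum_congr rfl (fun j _ => this j), ← Finset.mul_sum, hL,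
      Fin.sum_univ_eq_sum_range (fun j => 1 / lam j) n]
  calc (∑ j, a j) * L = ∑ k : Fin n, ∑ j : Fin n, a (j + k) / lam (j : ℕ) := h3.symm
    _ ≤ (n : ℝ) * V := h2
    _ = V * n := mul_comm _ _
end

section
/- Let 1 ≤ p ≤ q_n ↑ q ≤ ∞ and let Λ, Γ be Waterman sequences. If sup_n max_{1≤k≤δ_n} Γ(k)^{1/q_n} Λ(k)^{−1/p} < ∞, then every function f ∈ ΛBV^{(p)} belongs to ΓBV^{(q_n↑q)}, with V_Γ(f; q_n↑q; δ) ≤ V_Λ^{(p)}(f) · sup_n max_{1≤k≤δ_n} Γ(k)^{1/q_n} Λ(k)^{−1/p}. -/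
open Finset Filter

/-!
The intervals have length at least `1/δₙ`, so there are at most `δₙ` of them, and the hypothesis
gives `Γ(k) ≤ M^q Λ(k)^r` with `q = qₙ`, `r = q/p ≥ 1` for every `k` that occurs. By the
rearrangement inequality the oscillations may be taken in decreasing order `b₀ ≥ b₁ ≥ ⋯`. Abel
summation against the decreasing weights `b_k^q` gives
`∑ b_k^q/γ_k ≤ M^q ∑ b_k^q (Λ(k+1)^r - Λ(k)^r)`, and since the increments of the convex function
`t ↦ t^r` grow, `b_k^q (Λ(k+1)^r - Λ(k)^r) ≤ A_{k+1}^r - A_k^r` for the partial sums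
`A_k = ∑_{j<k} b_j^p/λ_j`. The sum telescopes to at most `A_s^r ≤ V^{pr} = V^q`.
-/

theorem ConvexOn.map_add_sub_map_le_of_le {s : Set ℝ} {f : ℝ → ℝ} (hf : ConvexOn ℝ s f)
    {x y c : ℝ} (hy : y ∈ s) (hxc : x + c ∈ s) (hyx : y ≤ x) (hc : 0 ≤ c) :
    f (y + c) - f y ≤ f (x + c) - f x := by
  rcases hc.eq_or_lt with rfl | hc
  · simp
  rcases hyx.eq_or_lt with rfl | hyx
  · rfl
  have hs := hf.1.ordConnected.out hy hxc
  have hyc : y + c ∈ s := hs ⟨by linarith, by linarith⟩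
  have hx : x ∈ s := hs ⟨hyx.le, by linarith⟩
  have h₁ : slope f y (y + c) ≤ slope f y (x + c) :=
    hf.slope_mono hy ⟨hyc, by simp [hc.ne']⟩ ⟨hxc, by simp; linarith⟩ (by linarith)
  have h₂ : slope f (x + c) y ≤ slope f (x + c) x :=
    hf.slope_mono hxc ⟨hy, by simp; linarith⟩ ⟨hx, by simp [hc.ne']⟩ hyx.le
  rw [slope_comm f (x + c) y, slope_comm f (x + c) x] at h₂
  have h := h₁.trans h₂
  simp only [slope_def_field, add_sub_cancel_left] at h
  exact (div_le_div_iff_of_pos_right hc).1 h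

theorem sum_sub_le_of_pairwise_disjoint_Ioo {ι : Type*} [Fintype ι] {a b : ℝ} {u v : ι → ℝ}
    (hab : a ≤ b) (hau : ∀ i, a ≤ u i) (huv : ∀ i, u i ≤ v i) (hvb : ∀ i, v i ≤ b)
    (hdisj : Pairwise fun i j => Disjoint (Set.Ioo (u i) (v i)) (Set.Ioo (u j) (v j))) :
    ∑ i, (v i - u i) ≤ b - a := by
  have hvol : MeasureTheory.volume (⋃ i, Set.Ioo (u i) (v i)) ≤ ENNReal.ofReal (b - a) := by
    rw [← Real.volume_Icc]
    exact MeasureTheory.measure_mono <| Set.iUnion_subset fun i =>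
      Set.Ioo_subset_Icc_self.trans (Set.Icc_subset_Icc (hau i) (hvb i))
  rw [MeasureTheory.measure_iUnion hdisj fun _ => measurableSet_Ioo, tsum_fintype] at hvol
  simp only [Real.volume_Ioo] at hvol
  rwa [← ENNReal.ofReal_sum_of_nonneg fun i _ => sub_nonneg.2 (huv i),
    ENNReal.ofReal_le_ofReal_iff (sub_nonneg.2 hab)] at hvol

theorem natCast_le_of_pairwise_disjoint_Ioo_of_inv_le {s : ℕ} {u v : Fin s → ℝ} {δ : ℝ}
    (hδ : 0 < δ) (huv : ∀ j, 0 ≤ u j ∧ u j < v j ∧ v j ≤ 1)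
    (hdisj : ∀ i j, i ≠ j → Set.Ioo (u i) (v i) ∩ Set.Ioo (u j) (v j) = ∅)
    (hlen : ∀ j, 1 / δ ≤ v j - u j) :
    (s : ℝ) ≤ δ := by
  have h := (sum_le_sum fun j _ => hlen j).trans <| sum_sub_le_of_pairwise_disjoint_Ioo
    zero_le_one (fun j => (huv j).1) (fun j => (huv j).2.1.le) (fun j => (huv j).2.2)
    fun i j hij => Set.disjoint_iff_inter_eq_empty.2 (hdisj i j hij)
  simp only [sum_const, card_univ, Fintype.card_fin, nsmul_eq_mul, mul_one_div] at h
  rwa [div_le_iff₀ hδ, sub_zero, one_mul] at h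

theorem Tuple.exists_perm_antitone_comp {α : Type*} [LinearOrder α] {n : ℕ} (a : Fin n → α) :
    ∃ σ : Equiv.Perm (Fin n), Antitone (a ∘ σ) :=
  ⟨Fin.revPerm.trans (Tuple.sort a), fun _ _ hij => Tuple.monotone_sort a (Fin.rev_le_rev.2 hij)⟩

theorem sum_mul_le_sum_comp_perm_mul {ι : Type*} [Fintype ι] [LinearOrder ι] {f w : ι → ℝ}
    {σ : Equiv.Perm ι} (hf : Antitone (f ∘ σ)) (hw : Antitone w) :
    ∑ i, f i * w i ≤ ∑ i, f (σ i) * w i := by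
  simpa using (hf.monovary hw).sum_comp_perm_mul_le_sum_mul (σ := σ⁻¹)

def Fin.padZero {n : ℕ} (a : Fin n → ℝ) (k : ℕ) : ℝ := if h : k < n then a ⟨k, h⟩ else 0

theorem Fin.padZero_val {n : ℕ} (a : Fin n → ℝ) (j : Fin n) : Fin.padZero a j = a j := by
  simp [Fin.padZero]

theorem Fin.padZero_nonneg {n : ℕ} {a : Fin n → ℝ} (ha : ∀ j, 0 ≤ a j) (k : ℕ) :
    0 ≤ Fin.padZero a k := by
  unfold Fin.padZero; split <;> simp [ha]

theorem Fin.antitone_padZero {n : ℕ} {a : Fin n → ℝ} (ha : Antitone a) (ha0 : ∀ j, 0 ≤ a j) :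
    Antitone (Fin.padZero a) := by
  intro k l hkl
  by_cases hl : l < n
  · simp only [Fin.padZero, dif_pos hl, dif_pos (hkl.trans_lt hl)]
    exact ha (Fin.mk_le_mk.2 hkl)
  · simp only [Fin.padZero, dif_neg hl]
    exact Fin.padZero_nonneg ha0 k

theorem Fin.sum_padZero {n : ℕ} (a : Fin n → ℝ) (F : ℝ → ℕ → ℝ) :
    ∑ k ∈ range n, F (Fin.padZero a k) k = ∑ j : Fin n, F (a j) j := by
  rw [← Fin.sum_univ_eq_sum_range]; simp only [Fin.padZero_val]

theorem le_mul_rpow_of_rpow_mul_rpow_neg_le {G L M p q : ℝ} (hG : 0 ≤ G) (hL : 0 < L)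
    (hM : 0 ≤ M) (hq : 0 < q) (h : G ^ (1 / q) * L ^ (-(1 / p)) ≤ M) :
    G ≤ M ^ q * L ^ (q / p) := by
  have h' : G ^ q⁻¹ ≤ M * L ^ p⁻¹ := by
    rwa [one_div, one_div, Real.rpow_neg hL.le, ← div_eq_mul_inv,
      div_le_iff₀ (by positivity)] at h
  rw [Real.rpow_inv_le_iff_of_pos hG (by positivity) hq, Real.mul_rpow hM (by positivity),
    ← Real.rpow_mul hL.le, inv_mul_eq_div] at h'
  exact h'

theorem sum_mul_sub_le_sum_mul_sub_of_antitone {c : ℕ → ℝ} (hc : Antitone c)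
    (hc0 : ∀ k, 0 ≤ c k) {F G : ℕ → ℝ} {s : ℕ} (h0 : G 0 = F 0)
    (hGF : ∀ k ≤ s, G k ≤ F k) :
    ∑ k ∈ range s, c k * (G (k + 1) - G k) ≤ ∑ k ∈ range s, c k * (F (k + 1) - F k) := by
  suffices key : ∀ m ≤ s, c m * (F m - G m) ≤
      ∑ k ∈ range m, c k * ((F (k + 1) - G (k + 1)) - (F k - G k)) by
    have hs := key s le_rfl
    have hcs : 0 ≤ c s * (F s - G s) := mul_nonneg (hc0 s) (sub_nonneg.2 (hGF s le_rfl))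
    have e : ∑ k ∈ range s, c k * ((F (k + 1) - G (k + 1)) - (F k - G k)) =
        ∑ k ∈ range s, c k * (F (k + 1) - F k) - ∑ k ∈ range s, c k * (G (k + 1) - G k) := by
      rw [← sum_sub_distrib]; exact sum_congr rfl fun k _ => by ring
    linarith
  intro m hm
  induction m with
  | zero => simp [h0]
  | succ m ih =>
    rw [sum_range_succ]
    have hcm : c (m + 1) * (F (m + 1) - G (m + 1)) ≤ c m * (F (m + 1) - G (m + 1)) :=
      mul_le_mul_of_nonneg_right (hc m.le_succ) (sub_nonneg.2 (hGF _ hm))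
    nlinarith [ih (by omega)]

theorem sum_rpow_mul_sub_le_rpow_sum {c : ℕ → ℝ} (hc : Antitone c) (hc0 : ∀ k, 0 ≤ c k)
    {r : ℝ} (hr : 1 ≤ r) {l : ℕ → ℝ} (hl : ∀ k, 0 ≤ l k) (m : ℕ) :
    ∑ k ∈ range m, c k ^ r * ((∑ j ∈ range (k + 1), l j) ^ r - (∑ j ∈ range k, l j) ^ r) ≤
      (∑ k ∈ range m, c k * l k) ^ r := by
  induction m with
  | zero => simp [Real.zero_rpow (by linarith : r ≠ 0)]
  | succ m ih =>
    set L := ∑ j ∈ range m, l j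
    have hL : 0 ≤ L := sum_nonneg fun j _ => hl j
    have hcL : c m * L ≤ ∑ k ∈ range m, c k * l k := by
      rw [mul_sum]
      exact sum_le_sum fun k hk =>
        mul_le_mul_of_nonneg_right (hc (mem_range.1 hk).le) (hl k)
    have hinc := (convexOn_rpow hr).map_add_sub_map_le_of_le (mul_nonneg (hc0 m) hL)
      (add_nonneg ((mul_nonneg (hc0 m) hL).trans hcL) (mul_nonneg (hc0 m) (hl m))) hcL
      (mul_nonneg (hc0 m) (hl m))
    rw [← mul_add, Real.mul_rpow (hc0 m) (add_nonneg hL (hl m)),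
      Real.mul_rpow (hc0 m) hL] at hinc
    rw [sum_range_succ, sum_range_succ, sum_range_succ]
    nlinarith [ih]

theorem sum_rpow_mul_le_mul_rpow_sum {c : ℕ → ℝ} (hc : Antitone c) (hc0 : ∀ k, 0 ≤ c k)
    {r C : ℝ} (hr : 1 ≤ r) (hC : 0 ≤ C) {l g : ℕ → ℝ} (hl : ∀ k, 0 ≤ l k) {s : ℕ}
    (hgl : ∀ k, 0 < k → k ≤ s → ∑ j ∈ range k, g j ≤ C * (∑ j ∈ range k, l j) ^ r) :
    ∑ k ∈ range s, c k ^ r * g k ≤ C * (∑ k ∈ range s, c k * l k) ^ r := by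
  have hcr : Antitone fun k => c k ^ r := fun i j hij =>
    Real.rpow_le_rpow (hc0 j) (hc hij) (by linarith)
  calc ∑ k ∈ range s, c k ^ r * g k
      = ∑ k ∈ range s, c k ^ r * (∑ j ∈ range (k + 1), g j - ∑ j ∈ range k, g j) := by
        simp only [sum_range_succ, add_sub_cancel_left]
    _ ≤ ∑ k ∈ range s, c k ^ r *
          (C * (∑ j ∈ range (k + 1), l j) ^ r - C * (∑ j ∈ range k, l j) ^ r) := by
        refine sum_mul_sub_le_sum_mul_sub_of_antitone hcr (fun k => Real.rpow_nonneg (hc0 k) r)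
          (F := fun k => C * (∑ j ∈ range k, l j) ^ r) (G := fun k => ∑ j ∈ range k, g j)
          (by simp [Real.zero_rpow (by linarith : r ≠ 0)]) fun k hk => ?_
        rcases k.eq_zero_or_pos with rfl | hk0
        · simp [Real.zero_rpow (by linarith : r ≠ 0)]
        · exact hgl k hk0 hk
    _ = C * ∑ k ∈ range s, c k ^ r *
          ((∑ j ∈ range (k + 1), l j) ^ r - (∑ j ∈ range k, l j) ^ r) := by
        rw [mul_sum]; exact sum_congr rfl fun k _ => by ring
    _ ≤ C * (∑ k ∈ range s, c k * l k) ^ r :=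
        mul_le_mul_of_nonneg_left (sum_rpow_mul_sub_le_rpow_sum hc hc0 hr hl s) hC

theorem sum_rpow_div_le_mul_rpow_sum_comp_perm {s : ℕ} {a : Fin s → ℝ} (ha0 : ∀ j, 0 ≤ a j)
    {σ : Equiv.Perm (Fin s)} (hσ : Antitone (a ∘ σ)) {lam gam : ℕ → ℝ}
    (hlam : ∀ j, 0 < lam j) (hgam : ∀ j, 0 < gam j) (hgammono : Monotone gam) {p q C : ℝ}
    (hp : 0 < p) (hpq : p ≤ q) (hC : 0 ≤ C)
    (hΓΛ : ∀ k, 0 < k → k ≤ s →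
      ∑ j ∈ range k, 1 / gam j ≤ C * (∑ j ∈ range k, 1 / lam j) ^ (q / p)) :
    ∑ j, a j ^ q / gam j ≤ C * (∑ j, a (σ j) ^ p / lam j) ^ (q / p) := by
  set b := Fin.padZero (a ∘ σ)
  have hb0 : ∀ k, 0 ≤ b k := Fin.padZero_nonneg fun _ => ha0 _
  have hbp : Antitone fun k => b k ^ p := fun i j hij =>
    Real.rpow_le_rpow (hb0 j) (Fin.antitone_padZero hσ (fun _ => ha0 _) hij) hp.le
  have hw : Antitone fun k : Fin s => 1 / gam k := fun i j hij =>
    one_div_le_one_div_of_le (hgam i) (hgammono (Fin.val_le_of_le hij))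
  have haq : Antitone fun k => a (σ k) ^ q := fun i j hij =>
    Real.rpow_le_rpow (ha0 _) (hσ hij) (hp.trans_le hpq).le
  calc ∑ j, a j ^ q / gam j
      = ∑ j, a j ^ q * (1 / gam j) := by simp only [mul_one_div]
    _ ≤ ∑ k, a (σ k) ^ q * (1 / gam k) := sum_mul_le_sum_comp_perm_mul haq hw
    _ = ∑ k, (a (σ k) ^ p) ^ (q / p) * (1 / gam k) := by
        refine sum_congr rfl fun k _ => ?_
        rw [← Real.rpow_mul (ha0 _), mul_div_cancel₀ _ hp.ne']
    _ = ∑ k ∈ range s, (b k ^ p) ^ (q / p) * (1 / gam k) :=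
        (Fin.sum_padZero (a ∘ σ) fun x k => (x ^ p) ^ (q / p) * (1 / gam k)).symm
    _ ≤ C * (∑ k ∈ range s, b k ^ p * (1 / lam k)) ^ (q / p) :=
        sum_rpow_mul_le_mul_rpow_sum hbp (fun k => Real.rpow_nonneg (hb0 k) p)
          ((one_le_div hp).2 hpq) hC (fun k => (one_div_pos.2 (hlam k)).le) hΓΛ
    _ = C * (∑ j, a (σ j) ^ p / lam j) ^ (q / p) := by
        rw [Fin.sum_padZero (a ∘ σ) fun x k => x ^ p * (1 / lam k)]
        simp only [Function.comp_apply, mul_one_div]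

theorem rpow_sum_rpow_div_le_mul_rpow_sum_comp_perm {s : ℕ} {a : Fin s → ℝ}
    (ha0 : ∀ j, 0 ≤ a j) {σ : Equiv.Perm (Fin s)} (hσ : Antitone (a ∘ σ)) {lam gam : ℕ → ℝ}
    (hlam : ∀ j, 0 < lam j) (hgam : ∀ j, 0 < gam j) (hgammono : Monotone gam) {p q M : ℝ}
    (hp : 0 < p) (hpq : p ≤ q) (hM : 0 ≤ M)
    (hΓΛ : ∀ k, 0 < k → k ≤ s →
      (∑ j ∈ range k, 1 / gam j) ^ (1 / q) * (∑ j ∈ range k, 1 / lam j) ^ (-(1 / p)) ≤ M) :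
    (∑ j, a j ^ q / gam j) ^ (1 / q) ≤ M * (∑ j, a (σ j) ^ p / lam j) ^ (1 / p) := by
  have hq : 0 < q := hp.trans_le hpq
  have hX : 0 ≤ ∑ j, a (σ j) ^ p / lam j :=
    sum_nonneg fun j _ => div_nonneg (Real.rpow_nonneg (ha0 _) p) (hlam j).le
  have hS : 0 ≤ ∑ j, a j ^ q / gam j :=
    sum_nonneg fun j _ => div_nonneg (Real.rpow_nonneg (ha0 j) q) (hgam j).le
  rw [one_div q, Real.rpow_inv_le_iff_of_pos hS (by positivity) hq,
    Real.mul_rpow hM (by positivity), ← Real.rpow_mul hX, one_div_mul_eq_div]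
  refine sum_rpow_div_le_mul_rpow_sum_comp_perm ha0 hσ hlam hgam hgammono hp hpq
    (Real.rpow_nonneg hM q) fun k hk hks => ?_
  exact le_mul_rpow_of_rpow_mul_rpow_neg_le (sum_nonneg fun j _ => (one_div_pos.2 (hgam j)).le)
    (sum_pos (fun j _ => one_div_pos.2 (hlam j)) (nonempty_range_iff.2 hk.ne')) hM hq
    (hΓΛ k hk hks)

theorem embedding_sufficiency_general (lam gam : ℕ → ℝ)
    (hlam : ∀ j, 0 < lam j) (hgam : ∀ j, 0 < gam j)
    (hgammono : Monotone gam)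
    (p : ℝ) (hp : 1 ≤ p)
    (qs : ℕ → ℝ) (hpqs : ∀ n, p ≤ qs n)
    (δ : ℕ → ℝ) (hδ2 : ∀ n, 2 ≤ δ n)
    (M : ℝ)
    (hM : ∀ (n k : ℕ), 1 ≤ k → (k : ℝ) ≤ δ n →
      (∑ j ∈ range k, 1 / gam j) ^ (1 / qs n) *
        (∑ j ∈ range k, 1 / lam j) ^ (-(1 / p)) ≤ M)
    (f : ℝ → ℝ) (V : ℝ)
    (hVf : ∀ (s : ℕ) (u v : Fin s → ℝ),
      (∀ j, 0 ≤ u j ∧ u j < v j ∧ v j ≤ 1) →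
      (∀ i j, i ≠ j → Set.Ioo (u i) (v i) ∩ Set.Ioo (u j) (v j) = ∅) →
      (∑ j, |f (v j) - f (u j)| ^ p / lam (j : ℕ)) ^ (1 / p) ≤ V) :
    ∀ (n : ℕ) (s : ℕ) (u v : Fin s → ℝ),
      (∀ j, 0 ≤ u j ∧ u j < v j ∧ v j ≤ 1) →
      (∀ i j, i ≠ j → Set.Ioo (u i) (v i) ∩ Set.Ioo (u j) (v j) = ∅) →
      (∀ j, 1 / δ n ≤ v j - u j) →
      (∑ j, |f (v j) - f (u j)| ^ (qs n) / gam (j : ℕ)) ^ (1 / qs n) ≤ V * M := by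
  intro n s u v hiv hnov hlen
  have hp0 : 0 < p := by linarith
  have hM0 : 0 ≤ M := by
    refine le_trans ?_ (hM n 1 le_rfl (by push_cast; linarith [hδ2 n]))
    have := hgam 0; have := hlam 0
    simp only [sum_range_one]; positivity
  have hsδ : (s : ℝ) ≤ δ n :=
    natCast_le_of_pairwise_disjoint_Ioo_of_inv_le (by linarith [hδ2 n]) hiv hnov hlen
  set a : Fin s → ℝ := fun j => |f (v j) - f (u j)|
  obtain ⟨σ, hσ⟩ := Tuple.exists_perm_antitone_comp a
  calc (∑ j, a j ^ qs n / gam j) ^ (1 / qs n)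
      ≤ M * (∑ j, a (σ j) ^ p / lam j) ^ (1 / p) :=
        rpow_sum_rpow_div_le_mul_rpow_sum_comp_perm (fun _ => abs_nonneg _) hσ hlam hgam
          hgammono hp0 (hpqs n) hM0 fun k hk hks => hM n k hk ((Nat.cast_le.2 hks).trans hsδ)
    _ ≤ M * V := by
        gcongr
        exact hVf s (u ∘ σ) (v ∘ σ) (fun j => hiv (σ j))
          fun i j hij => hnov (σ i) (σ j) (σ.injective.ne hij)
    _ = V * M := mul_comm M V

/-- Sufficiency in Theorem 1.4: if `sup_n max_{1≤k≤δₙ} Γ(k)^(1/qₙ) Λ(k)^(-1/p) ≤ M < ∞`,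
then every `f ∈ ΛBV^(p)` (with `(p,Λ)`-variation at most `V`) belongs to
`ΓBV^(qₙ↑q)`, with `V_Γ(f; qₙ↑q; δ) ≤ V · M`. -/
theorem embedding_sufficiency (lam gam : ℕ → ℝ)
    (hlam : ∀ j, 0 < lam j) (hgam : ∀ j, 0 < gam j)
    (hlammono : Monotone lam) (hgammono : Monotone gam)
    (hlamdiv : Tendsto (fun n => ∑ j ∈ range n, 1 / lam j) atTop atTop)
    (hgamdiv : Tendsto (fun n => ∑ j ∈ range n, 1 / gam j) atTop atTop)
    (p : ℝ) (hp : 1 ≤ p)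
    (qs : ℕ → ℝ) (hqs1 : ∀ n, 1 ≤ qs n) (hpqs : ∀ n, p ≤ qs n) (hqsmono : Monotone qs)
    (δ : ℕ → ℝ) (hδ2 : ∀ n, 2 ≤ δ n) (hδmono : Monotone δ) (hδdiv : Tendsto δ atTop atTop)
    (M : ℝ)
    (hM : ∀ (n k : ℕ), 1 ≤ k → (k : ℝ) ≤ δ n →
      (∑ j ∈ range k, 1 / gam j) ^ (1 / qs n) *
        (∑ j ∈ range k, 1 / lam j) ^ (-(1 / p)) ≤ M)
    (f : ℝ → ℝ) (V : ℝ)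
    (hVf : ∀ (s : ℕ) (u v : Fin s → ℝ),
      (∀ j, 0 ≤ u j ∧ u j < v j ∧ v j ≤ 1) →
      (∀ i j, i ≠ j → Set.Ioo (u i) (v i) ∩ Set.Ioo (u j) (v j) = ∅) →
      (∑ j, |f (v j) - f (u j)| ^ p / lam (j : ℕ)) ^ (1 / p) ≤ V) :
    ∀ (n : ℕ) (s : ℕ) (u v : Fin s → ℝ),
      (∀ j, 0 ≤ u j ∧ u j < v j ∧ v j ≤ 1) →
      (∀ i j, i ≠ j → Set.Ioo (u i) (v i) ∩ Set.Ioo (u j) (v j) = ∅) →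
      (∀ j, 1 / δ n ≤ v j - u j) →
      (∑ j, |f (v j) - f (u j)| ^ (qs n) / gam (j : ℕ)) ^ (1 / qs n) ≤ V * M :=
  embedding_sufficiency_general lam gam hlam hgam hgammono p hp qs hpqs δ hδ2 M hM f V hVf
end

section
/- Let 1 ≤ p < q_n ↑ q ≤ ∞ with 1 ≤ p < q, let Λ be a Waterman sequence, and δ_n = 2^n. Then ΛBV^{(p)} ⊆ ΛBV^{(q_n↑q)}; i.e., the union ⋃_{1≤p<q} ΛBV^{(p)} is contained in ΛBV^{(q_n↑q)}. -/
open Finset Filter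

/-- Corollary 1.7: with `δₙ = 2ⁿ`, for a Waterman sequence `Λ` and `1 ≤ p < qₙ ↑ q`, one has
`ΛBV^(p) ⊆ ΛBV^(qₙ↑q)`; hence `⋃_{1≤p<q} ΛBV^(p) ⊆ ΛBV^(qₙ↑q)`. -/
theorem union_LambdaBVp_subset (lam : ℕ → ℝ)
    (hlam : ∀ j, 0 < lam j) (hlammono : Monotone lam)
    (hlamdiv : Tendsto (fun n => ∑ j ∈ range n, 1 / lam j) atTop atTop)
    (p : ℝ) (hp : 1 ≤ p)
    (qs : ℕ → ℝ) (hqsmono : Monotone qs) (hqs1 : ∀ n, 1 ≤ qs n) (hpqs : ∀ n, p < qs n)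
    (f : ℝ → ℝ)
    (hf : ∃ V : ℝ, ∀ (s : ℕ) (u v : Fin s → ℝ),
      (∀ j, 0 ≤ u j ∧ u j < v j ∧ v j ≤ 1) →
      (∀ i j, i ≠ j → Set.Ioo (u i) (v i) ∩ Set.Ioo (u j) (v j) = ∅) →
      (∑ j, |f (v j) - f (u j)| ^ p / lam (j : ℕ)) ^ (1 / p) ≤ V) :
    ∃ W : ℝ, ∀ (n : ℕ) (s : ℕ) (u v : Fin s → ℝ),
      (∀ j, 0 ≤ u j ∧ u j < v j ∧ v j ≤ 1) →
      (∀ i j, i ≠ j → Set.Ioo (u i) (v i) ∩ Set.Ioo (u j) (v j) = ∅) →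
      (∀ j, 1 / (2 : ℝ) ^ n ≤ v j - u j) →
      (∑ j, |f (v j) - f (u j)| ^ (qs n) / lam (j : ℕ)) ^ (1 / qs n) ≤ W := by
  obtain ⟨V, hV⟩ := hf
  have hp0 : 0 < p := lt_of_lt_of_le one_pos hp
  have hV0 : 0 ≤ V := by
    have := hV 0 (fun j => 0) (fun j => 1) (fun j => j.elim0) (fun i => i.elim0)
    simpa [one_div, Real.zero_rpow (inv_ne_zero hp0.ne')] using this
  set M := V * lam 0 ^ (1 / p) with hM
  have hbound : ∀ (a b : ℝ), 0 ≤ a → a < b → b ≤ 1 → |f b - f a| ≤ M := by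
    intro a b ha hab hb1
    have h1 := hV 1 (fun _ => a) (fun _ => b) (fun j => ⟨ha, hab, hb1⟩)
      (fun i j hij => absurd (Subsingleton.elim i j) hij)
    simp only [Fin.sum_univ_one] at h1
    have hlam0 : 0 < lam 0 := hlam 0
    have hx : (0:ℝ) ≤ |f b - f a| := abs_nonneg _
    have heq : (|f b - f a| ^ p / lam ((0 : Fin 1) : ℕ)) ^ (1 / p)
        = |f b - f a| / lam 0 ^ (1 / p) := by
      rw [show ((0 : Fin 1) : ℕ) = 0 by rfl, Real.div_rpow (by positivity) hlam0.le,
        one_div, Real.rpow_rpow_inv hx hp0.ne']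
    rw [heq, div_le_iff₀ (by positivity)] at h1
    exact h1
  refine ⟨max M 1 * max V 1, ?_⟩
  intro n s u v h1 h2 _h3
  set A := max M 1 with hA
  set C := max V 1 with hC
  have hA1 : (1:ℝ) ≤ A := le_max_right _ _
  have hC1 : (1:ℝ) ≤ C := le_max_right _ _
  set qn := qs n with hqn
  have hq0 : 0 < qn := lt_of_lt_of_le one_pos (hqs1 n)
  have hpq : p < qn := hpqs n
  -- the p-variation sum is bounded by V^p
  have hSp : ∑ j, |f (v j) - f (u j)| ^ p / lam (j : ℕ) ≤ V ^ p := by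
    have hVp := hV s u v h1 h2
    have hS0 : (0:ℝ) ≤ ∑ j, |f (v j) - f (u j)| ^ p / lam (j : ℕ) := by
      apply Finset.sum_nonneg; intro j _
      have := (hlam (j : ℕ)); positivity
    have := Real.rpow_le_rpow (Real.rpow_nonneg hS0 _) hVp hp0.le
    rwa [← Real.rpow_mul hS0, one_div, inv_mul_cancel₀ hp0.ne', Real.rpow_one] at this
  -- termwise bound
  have hterm : ∀ j : Fin s, |f (v j) - f (u j)| ^ qn / lam (j : ℕ)
      ≤ A ^ (qn - p) * (|f (v j) - f (u j)| ^ p / lam (j : ℕ)) := by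
    intro j
    have hx : (0:ℝ) ≤ |f (v j) - f (u j)| := abs_nonneg _
    have hxA : |f (v j) - f (u j)| ≤ A :=
      le_trans (hbound (u j) (v j) (h1 j).1 (h1 j).2.1 (h1 j).2.2) (le_max_left _ _)
    have hsplit : |f (v j) - f (u j)| ^ qn
        = |f (v j) - f (u j)| ^ p * |f (v j) - f (u j)| ^ (qn - p) := by
      rw [← Real.rpow_add' hx (by intro h; linarith [show p + (qn - p) = qn by ring])]
      ring_nf
    have h2' : |f (v j) - f (u j)| ^ (qn - p) ≤ A ^ (qn - p) :=
      Real.rpow_le_rpow hx hxA (by linarith)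
    rw [hsplit, mul_div_assoc']
    have hnum : |f (v j) - f (u j)| ^ p * |f (v j) - f (u j)| ^ (qn - p)
        ≤ A ^ (qn - p) * |f (v j) - f (u j)| ^ p := by
      rw [mul_comm]
      exact mul_le_mul_of_nonneg_right h2' (by positivity)
    have hlj := hlam (j : ℕ)
    exact div_le_div_of_nonneg_right hnum hlj.le |>.trans_eq rfl
  have hS0 : (0:ℝ) ≤ ∑ j, |f (v j) - f (u j)| ^ qn / lam (j : ℕ) := by
    apply Finset.sum_nonneg; intro j _
    have := hlam (j : ℕ); positivity
  have hSsum : ∑ j, |f (v j) - f (u j)| ^ qn / lam (j : ℕ) ≤ A ^ (qn - p) * C ^ p := by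
    calc ∑ j, |f (v j) - f (u j)| ^ qn / lam (j : ℕ)
        ≤ ∑ j, A ^ (qn - p) * (|f (v j) - f (u j)| ^ p / lam (j : ℕ)) :=
          Finset.sum_le_sum fun j _ => hterm j
      _ = A ^ (qn - p) * ∑ j, |f (v j) - f (u j)| ^ p / lam (j : ℕ) := by
          rw [Finset.mul_sum]
      _ ≤ A ^ (qn - p) * V ^ p := by
          apply mul_le_mul_of_nonneg_left hSp (by positivity)
      _ ≤ A ^ (qn - p) * C ^ p := by
          apply mul_le_mul_of_nonneg_left _ (by positivity)
          exact Real.rpow_le_rpow hV0 (le_max_left _ _) hp0.le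
  have hfinal := Real.rpow_le_rpow hS0 hSsum (by positivity : (0:ℝ) ≤ 1 / qn)
  refine hfinal.trans ?_
  have hA0 : (0:ℝ) ≤ A := by linarith
  have hC0 : (0:ℝ) ≤ C := by linarith
  rw [Real.mul_rpow (by positivity) (by positivity), ← Real.rpow_mul hA0,
    ← Real.rpow_mul hC0]
  have e1 : A ^ ((qn - p) * (1 / qn)) ≤ A := by
    nth_rewrite 2 [show A = A ^ (1:ℝ) by rw [Real.rpow_one]]
    apply Real.rpow_le_rpow_of_exponent_le hA1
    rw [mul_one_div, div_le_one hq0]; linarith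
  have e2 : C ^ (p * (1 / qn)) ≤ C := by
    nth_rewrite 2 [show C = C ^ (1:ℝ) by rw [Real.rpow_one]]
    apply Real.rpow_le_rpow_of_exponent_le hC1
    rw [mul_one_div, div_le_one hq0]; linarith
  exact mul_le_mul e1 e2 (by positivity) hA0
end

section
/- Every function of Φ-bounded variation on [a,b] has one-sided limits at every point (it has only simple discontinuities). -/
/-! If `f` had no right limit at `x`, its oscillation on every `(x, x + δ)` would exceed some
`ε > 0`, giving infinitely many nonoverlapping intervals accumulating at `x` across each of which
`f` jumps by at least `ε`. Since every `φ j` is monotone, the first `k` of them give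
`∑ j < k, φ j ε ≤ V` for all `k`, contradicting `∑ φ j ε = ∞`. Left limits follow by reflecting
through `t ↦ -t`. -/

open Finset Filter Function Topology

section Oscillation

variable {α E : Type*} [LinearOrder α] [TopologicalSpace α] [OrderTopology α] [DenselyOrdered α]
  [NoMaxOrder α] [PseudoMetricSpace E] [CompleteSpace E]

theorem exists_oscillation_nhdsGT_of_not_tendsto {f : α → E} {x : α}
    (h : ¬ ∃ L, Tendsto f (𝓝[>] x) (𝓝 L)) :
    ∃ ε > 0, ∀ c, x < c → ∃ u v, x < u ∧ u < v ∧ v < c ∧ ε ≤ dist (f u) (f v) := by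
  rw [← cauchy_map_iff_exists_tendsto, cauchy_map_iff' (l := 𝓝[>] x),
    ((nhdsGT_basis x).prod_self.tendsto_iff Metric.uniformity_basis_dist)] at h
  push Not at h
  obtain ⟨ε, hε, hosc⟩ := h
  refine ⟨ε, hε, fun c hxc => ?_⟩
  obtain ⟨⟨u, v⟩, ⟨hu, hv⟩, huv⟩ := hosc c hxc
  replace huv : ε ≤ dist (f u) (f v) := not_lt.mp huv
  rcases lt_trichotomy u v with h | rfl | h
  · exact ⟨u, v, hu.1, h, hv.2, huv⟩
  · exact absurd huv (by simpa using hε)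
  · exact ⟨v, u, hv.1, h, hu.2, by rwa [dist_comm]⟩

end Oscillation

section Descending

variable {α : Type*} [LinearOrder α]

theorem exists_seq_descending_pairs {P : α → α → Prop} {x b : α} (hxb : x < b)
    (h : ∀ c, x < c → ∃ u v, x < u ∧ u < v ∧ v < c ∧ P u v) :
    ∃ u v : ℕ → α, (∀ n, x < u n ∧ u n < v n ∧ v n < b ∧ P (u n) (v n)) ∧
      ∀ n, v (n + 1) < u n := by
  choose! U W hxU hUW hWc hP using h
  let c : ℕ → α := fun n => n.rec b fun _ c => U c
  have hc : ∀ n, x < c n ∧ c n ≤ b := by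
    intro n
    induction n with
    | zero => exact ⟨hxb, le_rfl⟩
    | succ n ih =>
      have hUc : U (c n) < c n := (hUW _ ih.1).trans (hWc _ ih.1)
      exact ⟨hxU _ ih.1, hUc.le.trans ih.2⟩
  refine ⟨fun n => U (c n), fun n => W (c n), fun n => ?_, fun n => hWc _ (hc (n + 1)).1⟩
  exact ⟨hxU _ (hc n).1, hUW _ (hc n).1, (hWc _ (hc n).1).trans_le (hc n).2, hP _ (hc n).1⟩

theorem pairwise_disjoint_Ioo_of_succ_le {u v : ℕ → α} (huv : ∀ n, u n < v n)
    (h : ∀ n, v (n + 1) ≤ u n) : Pairwise (Disjoint on fun n => Set.Ioo (u n) (v n)) := by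
  have hv : Antitone v := antitone_nat_of_succ_le fun n => (h n).trans (huv n).le
  refine (pairwise_disjoint_on _).2 fun i j hij => Set.disjoint_left.2 ?_
  rintro y ⟨hiy, -⟩ ⟨-, hyj⟩
  exact (hyj.trans_le ((hv hij).trans (h i))).not_gt hiy

end Descending

def PhiVariationLE (φ : ℕ → ℝ → ℝ) (a b : ℝ) (f : ℝ → ℝ) (V : ℝ) : Prop :=
  ∀ (s : ℕ) (u v : Fin s → ℝ), (∀ j, a ≤ u j ∧ u j < v j ∧ v j ≤ b) →
    (∀ i j, i ≠ j → Set.Ioo (u i) (v i) ∩ Set.Ioo (u j) (v j) = ∅) →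
    ∑ j, φ j.1 |f (v j) - f (u j)| ≤ V

namespace PhiVariationLE

variable {φ : ℕ → ℝ → ℝ} {a b V : ℝ} {f : ℝ → ℝ}

theorem sum_le_of_seq (hmono : ∀ j, MonotoneOn (φ j) (Set.Ici 0))
    (hf : PhiVariationLE φ a b f V) {u v : ℕ → ℝ} (huv : ∀ n, a ≤ u n ∧ u n < v n ∧ v n ≤ b)
    (hdisj : Pairwise (Disjoint on fun n => Set.Ioo (u n) (v n))) {ε : ℝ} (hε : 0 ≤ ε)
    (hjump : ∀ n, ε ≤ |f (v n) - f (u n)|) (k : ℕ) : ∑ j ∈ range k, φ j ε ≤ V := calc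
  ∑ j ∈ range k, φ j ε = ∑ j : Fin k, φ j ε := (Fin.sum_univ_eq_sum_range _ k).symm
  _ ≤ ∑ j : Fin k, φ j |f (v j) - f (u j)| :=
    sum_le_sum fun j _ => hmono j hε (Set.mem_Ici.2 (abs_nonneg _)) (hjump j)
  _ ≤ V := hf k (fun j => u j) (fun j => v j) (fun j => huv j) fun _ _ hij =>
    Set.disjoint_iff_inter_eq_empty.1 (hdisj (Fin.val_injective.ne hij))

theorem exists_tendsto_nhdsGT (hmono : ∀ j, MonotoneOn (φ j) (Set.Ici 0))
    (hdivg : ∀ x : ℝ, 0 < x → Tendsto (fun k => ∑ j ∈ range k, φ j x) atTop atTop)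
    (hf : PhiVariationLE φ a b f V) {x : ℝ} (hax : a ≤ x) (hxb : x < b) :
    ∃ L, Tendsto f (𝓝[>] x) (𝓝 L) := by
  by_contra h
  obtain ⟨ε, hε, hosc⟩ := exists_oscillation_nhdsGT_of_not_tendsto h
  obtain ⟨u, v, huv, hchain⟩ := exists_seq_descending_pairs (P := fun u v => ε ≤ |f v - f u|)
    hxb fun c hxc => by simpa only [Real.dist_eq, abs_sub_comm] using hosc c hxc
  have hbound := hf.sum_le_of_seq hmono
    (fun n => ⟨hax.trans (huv n).1.le, (huv n).2.1, (huv n).2.2.1.le⟩)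
    (pairwise_disjoint_Ioo_of_succ_le (fun n => (huv n).2.1) fun n => (hchain n).le)
    hε.le fun n => (huv n).2.2.2
  obtain ⟨k, hk⟩ := ((hdivg ε hε).eventually_gt_atTop V).exists
  exact (hbound k).not_gt hk

theorem comp_neg (hf : PhiVariationLE φ a b f V) :
    PhiVariationLE φ (-b) (-a) (fun t => f (-t)) V := by
  intro s u v huv hdisj
  have := hf s (fun j => -v j) (fun j => -u j)
    (fun j => ⟨le_neg.1 (huv j).2.2, neg_lt_neg (huv j).2.1, neg_le.1 (huv j).1⟩)
    fun i j hij => Set.eq_empty_of_forall_notMem fun y ⟨⟨hy₁, hy₂⟩, hy₃, hy₄⟩ =>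
      (hdisj i j hij).subset ⟨⟨lt_neg.1 hy₂, neg_lt.1 hy₁⟩, lt_neg.1 hy₄, neg_lt.1 hy₃⟩
  simpa only [abs_sub_comm] using this

theorem exists_tendsto_nhdsLT (hmono : ∀ j, MonotoneOn (φ j) (Set.Ici 0))
    (hdivg : ∀ x : ℝ, 0 < x → Tendsto (fun k => ∑ j ∈ range k, φ j x) atTop atTop)
    (hf : PhiVariationLE φ a b f V) {x : ℝ} (hax : a < x) (hxb : x ≤ b) :
    ∃ L, Tendsto f (𝓝[<] x) (𝓝 L) := by
  obtain ⟨L, hL⟩ := hf.comp_neg.exists_tendsto_nhdsGT hmono hdivg (neg_le_neg hxb) (neg_lt_neg hax)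
  exact ⟨L, by simpa only [Function.comp_def, neg_neg] using hL.comp tendsto_neg_nhdsLT⟩

end PhiVariationLE

theorem PhiBV_one_sided_limits_general (φ : ℕ → ℝ → ℝ)
    (hmono : ∀ j, MonotoneOn (φ j) (Set.Ici 0))
    (hdivg : ∀ x : ℝ, 0 < x →
      Tendsto (fun k => ∑ j ∈ range k, φ j x) atTop atTop)
    (a b : ℝ) (f : ℝ → ℝ) (V : ℝ)
    (hVf : ∀ (s : ℕ) (u v : Fin s → ℝ),
      (∀ j, a ≤ u j ∧ u j < v j ∧ v j ≤ b) →
      (∀ i j, i ≠ j → Set.Ioo (u i) (v i) ∩ Set.Ioo (u j) (v j) = ∅) →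
      ∑ j, φ j.1 |f (v j) - f (u j)| ≤ V) :
    (∀ x ∈ Set.Ico a b, ∃ L : ℝ,
      Tendsto f (nhdsWithin x (Set.Ioo x b)) (nhds L)) ∧
    (∀ x ∈ Set.Ioc a b, ∃ L : ℝ,
      Tendsto f (nhdsWithin x (Set.Ioo a x)) (nhds L)) := by
  refine ⟨fun x hx => ?_, fun x hx => ?_⟩
  · rw [nhdsWithin_Ioo_eq_nhdsGT hx.2]
    exact PhiVariationLE.exists_tendsto_nhdsGT hmono hdivg hVf hx.1 hx.2
  · rw [nhdsWithin_Ioo_eq_nhdsLT hx.1]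
    exact PhiVariationLE.exists_tendsto_nhdsLT hmono hdivg hVf hx.1 hx.2

/-- Every function of `Φ`-bounded variation on `[a,b]` has one-sided limits at every point,
i.e. it has only simple discontinuities. -/
theorem PhiBV_one_sided_limits (φ : ℕ → ℝ → ℝ)
    (hmono : ∀ j, MonotoneOn (φ j) (Set.Ici 0))
    (hconv : ∀ j, ConvexOn ℝ (Set.Ici 0) (φ j))
    (hzero : ∀ j, φ j 0 = 0)
    (hord : ∀ j, ∀ x : ℝ, 0 < x → 0 < φ (j + 1) x ∧ φ (j + 1) x ≤ φ j x)
    (hdivg : ∀ x : ℝ, 0 < x →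
      Tendsto (fun k => ∑ j ∈ range k, φ j x) atTop atTop)
    (a b : ℝ) (hab : a ≤ b) (f : ℝ → ℝ) (V : ℝ)
    (hVf : ∀ (s : ℕ) (u v : Fin s → ℝ),
      (∀ j, a ≤ u j ∧ u j < v j ∧ v j ≤ b) →
      (∀ i j, i ≠ j → Set.Ioo (u i) (v i) ∩ Set.Ioo (u j) (v j) = ∅) →
      ∑ j, φ j.1 |f (v j) - f (u j)| ≤ V) :
    (∀ x ∈ Set.Ico a b, ∃ L : ℝ,
      Tendsto f (nhdsWithin x (Set.Ioo x b)) (nhds L)) ∧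
    (∀ x ∈ Set.Ioc a b, ∃ L : ℝ,
      Tendsto f (nhdsWithin x (Set.Ioo a x)) (nhds L)) :=
  PhiBV_one_sided_limits_general φ hmono hdivg a b f V hVf
end

section
/- Let Φ be a Schramm sequence with Φ_k(x) = ∑_{j=1}^k φ_j(x) strictly increasing, and 1 ≤ q_n ↑ q ≤ ∞, 2 ≤ δ_n ↑ ∞. If limsup_{n→∞} max_{1≤k≤δ_n} k^{1/q_n} Φ_k^{−1}(1) = ∞, then there exists a function f on [0,1] of Φ-bounded variation with f ∉ BV^{(q_n↑q)}. -/
/-!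
Pick levels `i` with `k_i ≤ δ_{n_i}` and `k_i^{1/q_{n_i}} Φ_{k_i}^{-1}(1) > 4 · 2^i (i + 1)`,
and let `f` take the value `h_i = 2^{-i} Φ_{k_i}^{-1}(1)` at the right endpoints of about
`k_i / 2` disjoint intervals of length `≥ 1/δ_{n_i}` in `[0, 1]`, and vanish elsewhere, in
particular at their left endpoints. The right endpoints of level `i` are taken in
`ℚ + (i + 1)√2` and the left ones in `ℚ`, so the levels do not interfere. Testing
`BV^{(q_n↑q)}` on the intervals of level `i` gives more than `i + 1`.

For the `Φ`-variation, the endpoints of non-overlapping intervals are distinct, so at level `i`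
the functions `φ_j` are evaluated at `h_i` for at most `k_i` distinct indices `j`. As `φ_j`
decreases in `j` and `φ_j(c x) ≤ c φ_j(x)` for `c ≤ 1`, level `i` contributes at most
`2^{-i} Φ_{k_i}(Φ_{k_i}^{-1}(1)) = 2^{-i}` from each family of endpoints.
-/

open Finset Filter Function

section SchrammSequence

variable {φ : ℕ → ℝ → ℝ}

theorem schramm_nonneg (hmono : ∀ j, MonotoneOn (φ j) (Set.Ici 0)) (hzero : ∀ j, φ j 0 = 0)
    (j : ℕ) {x : ℝ} (hx : 0 ≤ x) : 0 ≤ φ j x :=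
  hzero j ▸ hmono j Set.self_mem_Ici hx hx

theorem schramm_antitone (hzero : ∀ j, φ j 0 = 0)
    (hord : ∀ j, ∀ x : ℝ, 0 < x → 0 < φ (j + 1) x ∧ φ (j + 1) x ≤ φ j x)
    {x : ℝ} (hx : 0 ≤ x) : Antitone (φ · x) := by
  refine antitone_nat_of_succ_le fun j => ?_
  rcases hx.eq_or_lt with rfl | hx
  · simp [hzero]
  · exact (hord j x hx).2

theorem ConvexOn.map_mul_le {g : ℝ → ℝ} (hg : ConvexOn ℝ (Set.Ici 0) g) (h0 : g 0 = 0)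
    {c x : ℝ} (hc0 : 0 ≤ c) (hc1 : c ≤ 1) (hx : 0 ≤ x) : g (c * x) ≤ c * g x := by
  simpa [h0] using hg.2 (Set.mem_Ici.2 hx) Set.self_mem_Ici hc0 (sub_nonneg.2 hc1) (by ring)

theorem MonotoneOn.map_abs_sub_le_add {g : ℝ → ℝ} (hg : MonotoneOn g (Set.Ici 0)) (hg0 : 0 ≤ g 0)
    {a c : ℝ} (ha : 0 ≤ a) (hc : 0 ≤ c) : g |c - a| ≤ g a + g c := by
  have hga : 0 ≤ g a := hg0.trans (hg Set.self_mem_Ici ha ha)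
  have hgc : 0 ≤ g c := hg0.trans (hg Set.self_mem_Ici hc hc)
  rcases le_total a c with hac | hca
  · rw [abs_of_nonneg (sub_nonneg.2 hac)]
    linarith [hg (sub_nonneg.2 hac) hc (by linarith : c - a ≤ c)]
  · rw [abs_of_nonpos (sub_nonpos.2 hca)]
    linarith [hg (by linarith : (0 : ℝ) ≤ -(c - a)) ha (by linarith : -(c - a) ≤ a)]

theorem sum_schramm_mul_le (hmono : ∀ j, MonotoneOn (φ j) (Set.Ici 0))
    (hconv : ∀ j, ConvexOn ℝ (Set.Ici 0) (φ j)) (hzero : ∀ j, φ j 0 = 0)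
    {c y : ℝ} (hc0 : 0 ≤ c) (hc1 : c ≤ 1) (hy : 0 ≤ y) {N K : ℕ} (hy1 : ∑ m ∈ range K, φ m y = 1)
    (hNK : N ≤ K) : ∑ m ∈ range N, φ m (c * y) ≤ c := calc
  ∑ m ∈ range N, φ m (c * y) ≤ ∑ m ∈ range K, φ m (c * y) :=
    sum_le_sum_of_subset_of_nonneg (range_subset_range.2 hNK) fun m _ _ =>
      schramm_nonneg hmono hzero m (mul_nonneg hc0 hy)
  _ ≤ ∑ m ∈ range K, c * φ m y := sum_le_sum fun m _ => (hconv m).map_mul_le (hzero m) hc0 hc1 hy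
  _ = c := by rw [← mul_sum, hy1, mul_one]

theorem pos_of_sum_schramm_eq_one (hzero : ∀ j, φ j 0 = 0) {K : ℕ} {y : ℝ} (hy : 0 ≤ y)
    (hsum : ∑ m ∈ range K, φ m y = 1) : 0 < y := by
  refine hy.lt_of_ne fun h0 => ?_
  simp [← h0, hzero] at hsum

end SchrammSequence

theorem Antitone.sum_le_sum_range_card {g : ℕ → ℝ} (hg : Antitone g) (T : Finset ℕ) :
    ∑ j ∈ T, g j ≤ ∑ m ∈ range #T, g m := by
  induction T using Finset.induction_on_max with
  | empty => simp
  | insert a T ha ih =>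
    have haT : a ∉ T := fun h => lt_irrefl a (ha a h)
    have hTa : #T ≤ a := by
      simpa using card_le_card (fun x hx => mem_range.2 (ha x hx) : T ⊆ range a)
    rw [sum_insert haT, card_insert_of_notMem haT, sum_range_succ, add_comm]
    exact add_le_add ih (hg hTa)

theorem injective_left_of_Ioo_inter_eq_empty {ι α : Type*} [LinearOrder α] [DenselyOrdered α]
    {u v : ι → α} (huv : ∀ j, u j < v j)
    (hdisj : ∀ i j, i ≠ j → Set.Ioo (u i) (v i) ∩ Set.Ioo (u j) (v j) = ∅) : Injective u := by
  intro i j hij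
  by_contra hne
  have := hdisj i j hne
  rw [Set.Ioo_inter_Ioo, hij, max_self, Set.Ioo_eq_empty_iff] at this
  exact this (lt_min (hij ▸ huv i) (huv j))

theorem injective_right_of_Ioo_inter_eq_empty {ι α : Type*} [LinearOrder α] [DenselyOrdered α]
    {u v : ι → α} (huv : ∀ j, u j < v j)
    (hdisj : ∀ i j, i ≠ j → Set.Ioo (u i) (v i) ∩ Set.Ioo (u j) (v j) = ∅) : Injective v := by
  intro i j hij
  by_contra hne
  have := hdisj i j hne
  rw [Set.Ioo_inter_Ioo, hij, min_self, Set.Ioo_eq_empty_iff] at this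
  exact this (max_lt (hij ▸ huv i) (huv j))

section Spike

variable (A : ℕ → Finset ℝ) (h : ℕ → ℝ)

open Classical in
noncomputable def spikeLevel (x : ℝ) : ℕ := if hx : ∃ i, x ∈ A i then Nat.find hx else 0

open Classical in
noncomputable def spikeFun (x : ℝ) : ℝ := if ∃ i, x ∈ A i then h (spikeLevel A x) else 0

variable {A h}

theorem mem_spikeLevel {x : ℝ} (hx : ∃ i, x ∈ A i) : x ∈ A (spikeLevel A x) := by
  rw [spikeLevel, dif_pos hx]
  exact Nat.find_spec hx

theorem spikeLevel_eq (hA : Pairwise (Disjoint on A)) {x : ℝ} {i : ℕ} (hx : x ∈ A i) :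
    spikeLevel A x = i := by
  by_contra hne
  exact Finset.disjoint_left.1 (hA hne) (mem_spikeLevel ⟨i, hx⟩) hx

theorem spikeFun_of_mem (hA : Pairwise (Disjoint on A)) {x : ℝ} {i : ℕ} (hx : x ∈ A i) :
    spikeFun A h x = h i := by
  rw [spikeFun, if_pos ⟨i, hx⟩, spikeLevel_eq hA hx]

theorem spikeFun_of_forall_notMem {x : ℝ} (hx : ∀ i, x ∉ A i) : spikeFun A h x = 0 := by
  rw [spikeFun, if_neg (not_exists.2 hx)]

theorem spikeFun_nonneg (hh : ∀ i, 0 ≤ h i) (x : ℝ) : 0 ≤ spikeFun A h x := by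
  unfold spikeFun
  split_ifs
  exacts [hh _, le_rfl]

variable {φ : ℕ → ℝ → ℝ}

/-- At distinct points, level `i` meets at most `#(A i)` indices `j`, and since `φ j` decreases
in `j` the worst case is the first `#(A i)` of them. -/
theorem sum_schramm_spikeFun_le (hmono : ∀ j, MonotoneOn (φ j) (Set.Ici 0))
    (hzero : ∀ j, φ j 0 = 0)
    (hord : ∀ j, ∀ x : ℝ, 0 < x → 0 < φ (j + 1) x ∧ φ (j + 1) x ≤ φ j x)
    (hA : Pairwise (Disjoint on A)) (hh : ∀ i, 0 ≤ h i) {b : ℕ → ℝ} (hb : Summable b)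
    (hAb : ∀ i, ∑ m ∈ range #(A i), φ m (h i) ≤ b i) {s : ℕ} {x : Fin s → ℝ} (hx : Injective x) :
    ∑ j, φ j.1 (spikeFun A h (x j)) ≤ ∑' i, b i := by
  classical
  set T := univ.filter fun j => ∃ i, x j ∈ A i
  have hT : ∑ j ∈ T, φ j.1 (spikeFun A h (x j)) = ∑ j, φ j.1 (spikeFun A h (x j)) :=
    sum_filter_of_ne fun j _ hj => by
      by_contra hno
      exact hj (by rw [spikeFun_of_forall_notMem (not_exists.1 hno), hzero])
  have hlevel (i : ℕ) :
      ∑ j ∈ T with spikeLevel A (x j) = i, φ j.1 (spikeFun A h (x j)) ≤ b i := by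
    set S := T.filter fun j => spikeLevel A (x j) = i
    have hS : ∀ j ∈ S, x j ∈ A i := by
      intro j hj
      obtain ⟨hjT, rfl⟩ := mem_filter.1 hj
      exact mem_spikeLevel (mem_filter.1 hjT).2
    calc ∑ j ∈ S, φ j.1 (spikeFun A h (x j)) = ∑ m ∈ S.map Fin.valEmbedding, φ m (h i) := by
          rw [sum_map]
          exact sum_congr rfl fun j hj => by rw [spikeFun_of_mem hA (hS j hj)]; rfl
      _ ≤ ∑ m ∈ range #S, φ m (h i) := by
          simpa using (schramm_antitone hzero hord (hh i)).sum_le_sum_range_card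
            (S.map Fin.valEmbedding)
      _ ≤ ∑ m ∈ range #(A i), φ m (h i) :=
          sum_le_sum_of_subset_of_nonneg
            (range_subset_range.2 (card_le_card_of_injOn x hS hx.injOn))
            fun m _ _ => schramm_nonneg hmono hzero m (hh i)
      _ ≤ b i := hAb i
  have hb0 (i : ℕ) : 0 ≤ b i :=
    (sum_nonneg fun m _ => schramm_nonneg hmono hzero m (hh i)).trans (hAb i)
  calc ∑ j, φ j.1 (spikeFun A h (x j))
      = ∑ i ∈ T.image fun j => spikeLevel A (x j),
          ∑ j ∈ T with spikeLevel A (x j) = i, φ j.1 (spikeFun A h (x j)) := by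
        rw [sum_fiberwise_of_maps_to (fun j hj => mem_image_of_mem _ hj), hT]
    _ ≤ ∑ i ∈ T.image fun j => spikeLevel A (x j), b i := sum_le_sum fun i _ => hlevel i
    _ ≤ ∑' i, b i := hb.sum_le_tsum _ fun i _ => hb0 i

theorem schramm_variation_spikeFun_le (hmono : ∀ j, MonotoneOn (φ j) (Set.Ici 0))
    (hzero : ∀ j, φ j 0 = 0)
    (hord : ∀ j, ∀ x : ℝ, 0 < x → 0 < φ (j + 1) x ∧ φ (j + 1) x ≤ φ j x)
    (hA : Pairwise (Disjoint on A)) (hh : ∀ i, 0 ≤ h i) {b : ℕ → ℝ} (hb : Summable b)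
    (hAb : ∀ i, ∑ m ∈ range #(A i), φ m (h i) ≤ b i) {s : ℕ} {u v : Fin s → ℝ}
    (huv : ∀ j, u j < v j)
    (hdisj : ∀ i j, i ≠ j → Set.Ioo (u i) (v i) ∩ Set.Ioo (u j) (v j) = ∅) :
    ∑ j, φ j.1 |spikeFun A h (v j) - spikeFun A h (u j)| ≤ 2 * ∑' i, b i := calc
  ∑ j, φ j.1 |spikeFun A h (v j) - spikeFun A h (u j)|
      ≤ ∑ j, (φ j.1 (spikeFun A h (u j)) + φ j.1 (spikeFun A h (v j))) :=
    sum_le_sum fun j _ => (hmono j).map_abs_sub_le_add (hzero j).ge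
      (spikeFun_nonneg hh _) (spikeFun_nonneg hh _)
  _ = ∑ j, φ j.1 (spikeFun A h (u j)) + ∑ j, φ j.1 (spikeFun A h (v j)) := sum_add_distrib
  _ ≤ ∑' i, b i + ∑' i, b i :=
    add_le_add
      (sum_schramm_spikeFun_le hmono hzero hord hA hh hb hAb
        (injective_left_of_Ioo_inter_eq_empty huv hdisj))
      (sum_schramm_spikeFun_le hmono hzero hord hA hh hb hAb
        (injective_right_of_Ioo_inter_eq_empty huv hdisj))
  _ = 2 * ∑' i, b i := (two_mul _).symm

end Spike

def ratCoset (n : ℕ) : Set ℝ := Set.range fun q : ℚ => (q : ℝ) + n * √2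

theorem dense_ratCoset (n : ℕ) : Dense (ratCoset n) :=
  ((Homeomorph.addRight ((n : ℝ) * √2)).surjective.denseRange.comp Rat.denseRange_cast
    (continuous_add_const _) :)

theorem disjoint_ratCoset {m n : ℕ} (hmn : m ≠ n) : Disjoint (ratCoset m) (ratCoset n) := by
  rw [Set.disjoint_left]
  rintro _ ⟨p, rfl⟩ ⟨q, hq⟩
  have hmn' : ((m : ℤ) - n) ≠ 0 := sub_ne_zero.2 (by exact_mod_cast hmn)
  refine (irrational_sqrt_two.intCast_mul hmn').ne_rat (q - p) ?_
  push_cast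
  linarith

theorem pairwise_disjoint_of_subset_ratCoset {A : ℕ → Finset ℝ}
    (hA : ∀ i, ∀ x ∈ A i, x ∈ ratCoset (i + 1)) : Pairwise (Disjoint on A) := fun i l hil =>
  Finset.disjoint_left.2 fun x hxi hxl =>
    Set.disjoint_left.1 (disjoint_ratCoset (by omega)) (hA i x hxi) (hA l x hxl)

theorem spikeFun_of_mem_ratCoset_zero {A : ℕ → Finset ℝ} {h : ℕ → ℝ}
    (hA : ∀ i, ∀ x ∈ A i, x ∈ ratCoset (i + 1)) {x : ℝ} (hx : x ∈ ratCoset 0) :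
    spikeFun A h x = 0 :=
  spikeFun_of_forall_notMem fun i hi =>
    Set.disjoint_left.1 (disjoint_ratCoset (by omega)) hx (hA i x hi)

theorem Set.Ioo_inter_Ioo_eq_empty_of_le {α : Type*} [Preorder α] {a b c d : α} (h : b ≤ c) :
    Set.Ioo a b ∩ Set.Ioo c d = ∅ :=
  Set.eq_empty_of_forall_notMem fun _ hx => lt_asymm (hx.1.2.trans_le h) hx.2.1

theorem exists_spaced_intervals {D E : Set ℝ} (hD : Dense D) (hE : Dense E) {t : ℝ} (ht : 0 < t)
    {m : ℕ} (hm : 2 * m * t ≤ 1) :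
    ∃ u v : Fin m → ℝ, (∀ j, u j ∈ E ∧ v j ∈ D) ∧ (∀ j, 0 ≤ u j ∧ u j < v j ∧ v j ≤ 1) ∧
      (∀ i j, i ≠ j → Set.Ioo (u i) (v i) ∩ Set.Ioo (u j) (v j) = ∅) ∧ ∀ j, t ≤ v j - u j := by
  have hu (j : Fin m) : ∃ x ∈ E, x ∈ Set.Ioo (2 * j * t) (2 * j * t + t / 2) :=
    hE.exists_between (by linarith)
  have hv (j : Fin m) : ∃ x ∈ D, x ∈ Set.Ioo (2 * j * t + 3 * t / 2) (2 * j * t + 2 * t) :=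
    hD.exists_between (by linarith)
  choose u huE hu using hu
  choose v hvD hv using hv
  have hvu {i j : Fin m} (hij : i < j) : v i ≤ u j := by
    have : (i : ℝ) + 1 ≤ j := by exact_mod_cast hij
    nlinarith [(hv i).2, (hu j).1]
  refine ⟨u, v, fun j => ⟨huE j, hvD j⟩, fun j => ⟨?_, ?_, ?_⟩, ?_, fun j => ?_⟩
  · nlinarith [(hu j).1, Nat.cast_nonneg (α := ℝ) j.1]
  · linarith [(hu j).2, (hv j).1]
  · have : (j : ℝ) + 1 ≤ m := by exact_mod_cast j.2
    nlinarith [(hv j).2]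
  · intro i j hij
    rcases hij.lt_or_gt with hij | hij
    · exact Set.Ioo_inter_Ioo_eq_empty_of_le (hvu hij)
    · rw [Set.inter_comm]
      exact Set.Ioo_inter_Ioo_eq_empty_of_le (hvu hij)
  · linarith [(hu j).2, (hv j).1]

theorem exists_nat_quarter_le_and_two_mul_le {k : ℕ} {δ : ℝ} (hk : 1 ≤ k) (hkδ : k ≤ δ)
    (hδ : 2 ≤ δ) :
    ∃ m : ℕ, m ≤ k ∧ k ≤ 4 * m ∧ 2 * (m : ℝ) ≤ δ := by
  rcases Nat.lt_or_ge k 2 with hk2 | hk2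
  · exact ⟨1, hk, by omega, by norm_num; linarith⟩
  · refine ⟨k / 2, Nat.div_le_self _ _, by omega, ?_⟩
    calc 2 * ((k / 2 : ℕ) : ℝ) = ((2 * (k / 2) : ℕ) : ℝ) := by push_cast; ring
      _ ≤ k := by exact_mod_cast Nat.mul_div_le k 2
      _ ≤ δ := hkδ

theorem Real.rpow_le_mul_rpow_of_le_mul {x y c p : ℝ} (hx : 0 ≤ x) (hy : 0 ≤ y) (hc : 1 ≤ c)
    (hxy : x ≤ c * y) (hp0 : 0 ≤ p) (hp1 : p ≤ 1) : x ^ p ≤ c * y ^ p := calc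
  x ^ p ≤ (c * y) ^ p := Real.rpow_le_rpow hx hxy hp0
  _ = c ^ p * y ^ p := Real.mul_rpow (by linarith) hy
  _ ≤ c * y ^ p :=
    mul_le_mul_of_nonneg_right (Real.rpow_le_self_of_one_le hc hp1) (by positivity)

theorem sum_abs_sub_rpow_rpow_one_div {f : ℝ → ℝ} {m : ℕ} {u v : Fin m → ℝ} {c q : ℝ}
    (hc : 0 ≤ c) (hq : q ≠ 0) (hu : ∀ j, f (u j) = 0) (hv : ∀ j, f (v j) = c) :
    (∑ j, |f (v j) - f (u j)| ^ q) ^ (1 / q) = (m : ℝ) ^ (1 / q) * c := by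
  simp only [hu, hv, sub_zero, abs_of_nonneg hc, sum_const, card_univ, Fintype.card_fin,
    nsmul_eq_mul]
  rw [Real.mul_rpow (Nat.cast_nonneg _) (by positivity), ← Real.rpow_mul hc,
    mul_one_div_cancel hq, Real.rpow_one]

theorem add_one_lt_rpow_mul_half_pow_mul {q y : ℝ} {i k m : ℕ} (hq : 1 ≤ q) (hy : 0 ≤ y)
    (hkm : k ≤ 4 * m) (hk : 4 * (2 ^ i * (i + 1)) < (k : ℝ) ^ (1 / q) * y) :
    (i : ℝ) + 1 < (m : ℝ) ^ (1 / q) * ((1 / 2) ^ i * y) := by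
  have hkm' : (k : ℝ) ^ (1 / q) ≤ 4 * (m : ℝ) ^ (1 / q) :=
    Real.rpow_le_mul_rpow_of_le_mul (Nat.cast_nonneg k) (Nat.cast_nonneg m) (by norm_num)
      (by exact_mod_cast hkm) (by positivity) ((div_le_one (by linarith)).2 hq)
  have hm : 2 ^ i * ((i : ℝ) + 1) < (m : ℝ) ^ (1 / q) * y := by
    nlinarith [mul_le_mul_of_nonneg_right hkm' hy]
  calc (i : ℝ) + 1 = (1 / 2) ^ i * (2 ^ i * (i + 1)) := by rw [← mul_assoc, ← mul_pow]; norm_num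
    _ < (1 / 2) ^ i * ((m : ℝ) ^ (1 / q) * y) := mul_lt_mul_of_pos_left hm (by positivity)
    _ = (m : ℝ) ^ (1 / q) * ((1 / 2) ^ i * y) := by ring

theorem schramm_embedding_necessity_general (φ : ℕ → ℝ → ℝ)
    (hmono : ∀ j, MonotoneOn (φ j) (Set.Ici 0))
    (hconv : ∀ j, ConvexOn ℝ (Set.Ici 0) (φ j))
    (hzero : ∀ j, φ j 0 = 0)
    (hord : ∀ j, ∀ x : ℝ, 0 < x → 0 < φ (j + 1) x ∧ φ (j + 1) x ≤ φ j x)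
    (inv : ℕ → ℝ)
    (hinv : ∀ k : ℕ, 1 ≤ k → 0 ≤ inv k ∧ ∑ j ∈ range k, φ j (inv k) = 1)
    (qs : ℕ → ℝ) (hqs1 : ∀ n, 1 ≤ qs n)
    (δ : ℕ → ℝ) (hδ2 : ∀ n, 2 ≤ δ n)
    (hlimsup : ∀ M : ℝ, ∃ᶠ n in atTop, ∃ k : ℕ, 1 ≤ k ∧ (k : ℝ) ≤ δ n ∧
      M < (k : ℝ) ^ (1 / qs n) * inv k) :
    ∃ f : ℝ → ℝ,
      (∃ V : ℝ, ∀ (s : ℕ) (u v : Fin s → ℝ),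
        (∀ j, 0 ≤ u j ∧ u j < v j ∧ v j ≤ 1) →
        (∀ i j, i ≠ j → Set.Ioo (u i) (v i) ∩ Set.Ioo (u j) (v j) = ∅) →
        ∑ j, φ j.1 |f (v j) - f (u j)| ≤ V) ∧
      ¬ (∃ W : ℝ, ∀ (n : ℕ) (s : ℕ) (u v : Fin s → ℝ),
        (∀ j, 0 ≤ u j ∧ u j < v j ∧ v j ≤ 1) →
        (∀ i j, i ≠ j → Set.Ioo (u i) (v i) ∩ Set.Ioo (u j) (v j) = ∅) →
        (∀ j, 1 / δ n ≤ v j - u j) →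
        (∑ j, |f (v j) - f (u j)| ^ (qs n)) ^ (1 / qs n) ≤ W) := by
  choose n k hk hkδ hM using fun i : ℕ => (hlimsup (4 * (2 ^ i * (i + 1)))).exists
  choose m hmk hkm hmδ using fun i =>
    exists_nat_quarter_le_and_two_mul_le (hk i) (hkδ i) (hδ2 (n i))
  have hδ (i : ℕ) : 0 < δ (n i) := by linarith [hδ2 (n i)]
  choose u v hcoset hbd hdisj hlen using fun i =>
    exists_spaced_intervals (dense_ratCoset (i + 1)) (dense_ratCoset 0) (one_div_pos.2 (hδ i))
      (m := m i) (by rw [mul_one_div, div_le_one (hδ i)]; exact hmδ i)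
  have hinv_pos (i : ℕ) : 0 < inv (k i) :=
    pos_of_sum_schramm_eq_one hzero (hinv _ (hk i)).1 (hinv _ (hk i)).2
  set A : ℕ → Finset ℝ := fun i => univ.image (v i)
  set h : ℕ → ℝ := fun i => (1 / 2) ^ i * inv (k i)
  have hh (i : ℕ) : 0 ≤ h i := mul_nonneg (by positivity) (hinv_pos i).le
  have hA_coset : ∀ i, ∀ x ∈ A i, x ∈ ratCoset (i + 1) := by
    simp only [A, mem_image, mem_univ, true_and, forall_exists_index, forall_apply_eq_imp_iff]
    exact fun i j => (hcoset i j).2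
  have hA := pairwise_disjoint_of_subset_ratCoset hA_coset
  have hAb (i : ℕ) : ∑ j ∈ range #(A i), φ j (h i) ≤ (1 / 2) ^ i :=
    sum_schramm_mul_le hmono hconv hzero (by positivity) (pow_le_one₀ (by norm_num) (by norm_num))
      (hinv_pos i).le (hinv _ (hk i)).2 (card_image_le.trans (by simpa using hmk i))
  refine ⟨spikeFun A h, ⟨2 * ∑' i, (1 / 2 : ℝ) ^ i, fun s u' v' hbd' hdisj' =>
    schramm_variation_spikeFun_le hmono hzero hord hA hh summable_geometric_two hAb
      (fun j => (hbd' j).2.1) hdisj'⟩, ?_⟩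
  rintro ⟨W, hW⟩
  obtain ⟨i, hi⟩ := exists_nat_gt W
  have hval := hW (n i) (m i) (u i) (v i) (hbd i) (hdisj i) (hlen i)
  rw [sum_abs_sub_rpow_rpow_one_div (hh i) (by linarith [hqs1 (n i)])
    (fun j => spikeFun_of_mem_ratCoset_zero hA_coset (hcoset i j).1)
    (fun j => spikeFun_of_mem hA (mem_image_of_mem _ (mem_univ j)))] at hval
  linarith [add_one_lt_rpow_mul_half_pow_mul (hqs1 (n i)) (hinv_pos i).le (hkm i) (hM i)]

/-- Necessity in Theorem 1.8: if `limsup_n max_{1≤k≤δₙ} k^(1/qₙ) Φ_k⁻¹(1) = ∞`, then there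
is a function `f` on `[0,1]` of `Φ`-bounded variation which does not belong to
`BV^(qₙ↑q)`. -/
theorem schramm_embedding_necessity (φ : ℕ → ℝ → ℝ)
    (hmono : ∀ j, MonotoneOn (φ j) (Set.Ici 0))
    (hconv : ∀ j, ConvexOn ℝ (Set.Ici 0) (φ j))
    (hzero : ∀ j, φ j 0 = 0)
    (hord : ∀ j, ∀ x : ℝ, 0 < x → 0 < φ (j + 1) x ∧ φ (j + 1) x ≤ φ j x)
    (hdivg : ∀ x : ℝ, 0 < x →
      Tendsto (fun k => ∑ j ∈ range k, φ j x) atTop atTop)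
    (hstrict : ∀ k : ℕ, 1 ≤ k →
      StrictMonoOn (fun x => ∑ j ∈ range k, φ j x) (Set.Ici 0))
    (inv : ℕ → ℝ)
    (hinv : ∀ k : ℕ, 1 ≤ k → 0 ≤ inv k ∧ ∑ j ∈ range k, φ j (inv k) = 1)
    (qs : ℕ → ℝ) (hqs1 : ∀ n, 1 ≤ qs n) (hqsmono : Monotone qs)
    (δ : ℕ → ℝ) (hδ2 : ∀ n, 2 ≤ δ n) (hδmono : Monotone δ) (hδdiv : Tendsto δ atTop atTop)
    (hlimsup : ∀ M : ℝ, ∃ᶠ n in atTop, ∃ k : ℕ, 1 ≤ k ∧ (k : ℝ) ≤ δ n ∧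
      M < (k : ℝ) ^ (1 / qs n) * inv k) :
    ∃ f : ℝ → ℝ,
      (∃ V : ℝ, ∀ (s : ℕ) (u v : Fin s → ℝ),
        (∀ j, 0 ≤ u j ∧ u j < v j ∧ v j ≤ 1) →
        (∀ i j, i ≠ j → Set.Ioo (u i) (v i) ∩ Set.Ioo (u j) (v j) = ∅) →
        ∑ j, φ j.1 |f (v j) - f (u j)| ≤ V) ∧
      ¬ (∃ W : ℝ, ∀ (n : ℕ) (s : ℕ) (u v : Fin s → ℝ),
        (∀ j, 0 ≤ u j ∧ u j < v j ∧ v j ≤ 1) →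
        (∀ i j, i ≠ j → Set.Ioo (u i) (v i) ∩ Set.Ioo (u j) (v j) = ∅) →
        (∀ j, 1 / δ n ≤ v j - u j) →
        (∑ j, |f (v j) - f (u j)| ^ (qs n)) ^ (1 / qs n) ≤ W) :=
  schramm_embedding_necessity_general φ hmono hconv hzero hord inv hinv qs hqs1 δ hδ2 hlimsup
end

section
/- Let Φ be a Schramm sequence with Φ_k(x) = ∑_{j=1}^k φ_j(x) strictly increasing, let q ≥ 1, and let x_1 ≥ x_2 ≥ … ≥ x_n ≥ 0 satisfy ∑_{j=1}^n φ_j(x_j) ≤ V for some V > 0. Then (∑_{j=1}^n x_j^q)^{1/q} ≤ 16 · max_{1≤k≤n} k^{1/q} Φ_k^{−1}(V). -/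
/-!
Cut the values at the dyadic levels `t = x₀ / 2 ^ (i + 1)` and let `c` be the number of
`x_j ≥ t`; then `∑ x_j ^ q ≤ 2 ^ q ∑_i c t ^ q`. Since the `x_j` decrease, monotonicity gives
`Φ_c(t) ≤ V`, and by convexity `φ_j(s) ≤ (s / y) φ_j(y)` for `s ≤ y`, so the levels below each
`x_j` contribute at most `2 φ_j(x_j)` and `∑_i Φ_c(t) ≤ 2V`. As `j ↦ φ_j(t)` is nonincreasing,
`Φ_k(t) ≤ (k / c) Φ_c(t)`; taking `k ≈ c V / Φ_c(t)`, capped at `n`, gives `t ≤ Φ_k⁻¹(V)`, hence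
`c t ^ q ≤ 2 M ^ q Φ_c(t) / V` with `M = max_k k ^ (1 / q) Φ_k⁻¹(V)`, unless `t ≤ Φ_n⁻¹(V)`.
The levels of the latter kind are geometric below `Φ_n⁻¹(V)` and contribute at most `2 M ^ q`.
Altogether `∑ x_j ^ q ≤ 2 ^ q · 6 M ^ q ≤ (16 M) ^ q`.
-/

open Finset Filter Real

theorem sum_filter_div_two_pow_le {a b : ℝ} (ha : 0 ≤ a) (hb : 0 ≤ b) (N : ℕ) :
    ∑ i ∈ range N with a / 2 ^ i ≤ b, a / 2 ^ i ≤ 2 * b := by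
  induction N generalizing a with
  | zero => simpa using hb
  | succ N ih =>
    by_cases hab : a ≤ b
    · calc ∑ i ∈ range (N + 1) with a / 2 ^ i ≤ b, a / 2 ^ i
          ≤ ∑ i ∈ range (N + 1), a / 2 ^ i :=
            sum_le_sum_of_subset_of_nonneg (filter_subset _ _) fun _ _ _ => by positivity
        _ = a * ∑ i ∈ range (N + 1), (1 / 2 : ℝ) ^ i := by
            rw [mul_sum]
            exact sum_congr rfl fun i _ => by rw [one_div, inv_pow, div_eq_mul_inv]
        _ ≤ a * 2 := by gcongr; exact sum_geometric_two_le _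
        _ ≤ 2 * b := by linarith
    · have h := ih (a := a / 2) (by positivity)
      rw [sum_filter] at h ⊢
      rw [sum_range_succ']
      simpa [pow_succ, div_div, hab, mul_comm] using h

theorem ConvexOn.le_div_mul_of_map_zero {f : ℝ → ℝ} (hf : ConvexOn ℝ (Set.Ici 0) f)
    (hf0 : f 0 = 0) {s y : ℝ} (hs : 0 ≤ s) (hsy : s ≤ y) : f s ≤ s / y * f y := by
  rcases (hs.trans hsy).eq_or_lt with rfl | hy
  · simp [le_antisymm hsy hs, hf0]
  have h := hf.2 (Set.mem_Ici.2 hy.le) (Set.self_mem_Ici) (div_nonneg hs hy.le)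
    (sub_nonneg.2 ((div_le_one hy).2 hsy)) (add_sub_cancel _ _)
  simpa [hf0, div_mul_cancel₀ _ hy.ne'] using h

theorem ConvexOn.sum_filter_div_two_pow_le {f : ℝ → ℝ} (hf : ConvexOn ℝ (Set.Ici 0) f)
    (hf0 : f 0 = 0) {a y : ℝ} (ha : 0 ≤ a) (hy : 0 ≤ y) (hfy : 0 ≤ f y) (N : ℕ) :
    ∑ i ∈ range N with a / 2 ^ i ≤ y, f (a / 2 ^ i) ≤ 2 * f y := by
  calc ∑ i ∈ range N with a / 2 ^ i ≤ y, f (a / 2 ^ i)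
      ≤ ∑ i ∈ range N with a / 2 ^ i ≤ y, f y / y * (a / 2 ^ i) :=
        sum_le_sum fun i hi => by
          rw [div_mul_comm]
          exact hf.le_div_mul_of_map_zero hf0 (by positivity) (mem_filter.1 hi).2
    _ ≤ f y / y * (2 * y) := by
        rw [← mul_sum]; gcongr; exact _root_.sum_filter_div_two_pow_le ha hy N
    _ = 2 * f y := by
        rcases hy.eq_or_lt with rfl | hy
        · simp [hf0]
        · field_simp

theorem Antitone.mul_sum_range_le {u : ℕ → ℝ} (hu : Antitone u) {c k : ℕ} (hck : c ≤ k) :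
    c * ∑ j ∈ range k, u j ≤ k * ∑ j ∈ range c, u j := by
  induction k, hck using Nat.le_induction with
  | base => rfl
  | succ k hck ih =>
    have h : (c : ℝ) * u k ≤ ∑ j ∈ range c, u j := by
      simpa using card_nsmul_le_sum (range c) u (u k) fun j hj => hu (by simp at hj; omega)
    push_cast
    rw [sum_range_succ]
    linarith

theorem exists_nat_mul_le_and_le_two_mul {c n : ℕ} {w V : ℝ} (hc : 1 ≤ c) (hcn : c ≤ n)
    (hw : 0 ≤ w) (hwV : w ≤ V) :
    ∃ k, c ≤ k ∧ k ≤ n ∧ k * w ≤ c * V ∧ (k = n ∨ c * V ≤ 2 * k * w) := by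
  by_cases h : n * w ≤ c * V
  · exact ⟨n, hcn, le_rfl, h, Or.inl rfl⟩
  replace h := not_le.1 h
  have hw0 : 0 < w := by
    rcases hw.eq_or_lt with rfl | hw
    · nlinarith
    · exact hw
  have hr : 0 ≤ c * V / w := div_nonneg (mul_nonneg c.cast_nonneg (hw.trans hwV)) hw
  have hc1 : (1 : ℝ) ≤ c := by exact_mod_cast hc
  refine ⟨⌊c * V / w⌋₊, Nat.le_floor ?_, ((Nat.floor_lt hr).2 ?_).le, ?_, Or.inr ?_⟩
  · rw [le_div_iff₀ hw0]; gcongr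
  · rwa [div_lt_iff₀ hw0]
  · rw [← le_div_iff₀ hw0]; exact Nat.floor_le hr
  · have hk : (c : ℝ) ≤ ⌊c * V / w⌋₊ := by
      exact_mod_cast Nat.le_floor (by rw [le_div_iff₀ hw0]; gcongr)
    have := Nat.lt_floor_add_one (c * V / w)
    rw [div_lt_iff₀ hw0] at this
    nlinarith

theorem Finset.filter_range_eq_range_card {n : ℕ} {p : ℕ → Prop} [DecidablePred p]
    (hp : ∀ i j, i ≤ j → j < n → p j → p i) :
    {j ∈ range n | p j} = range #{j ∈ range n | p j} := by
  refine eq_of_subset_of_card_le (fun j hj => ?_) (by simp)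
  have h : range (j + 1) ⊆ {j ∈ range n | p j} := fun i hi => by
    simp only [mem_filter, mem_range] at hj hi ⊢
    exact ⟨by omega, hp i j (by omega) hj.1 hj.2⟩
  simpa using card_le_card h

theorem exists_div_two_pow_le (a : ℝ) (x : ℕ → ℝ) (n : ℕ) :
    ∃ N : ℕ, ∀ j < n, 0 < x j → a / 2 ^ N ≤ x j := by
  have h : ∀ j ∈ range n, ∀ᶠ N : ℕ in atTop, 0 < x j → a / 2 ^ N ≤ x j := fun j _ => by
    by_cases hj : 0 < x j
    · have := (tendsto_pow_atTop_atTop_of_one_lt one_lt_two).const_div_atTop a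
      exact (this.eventually (ge_mem_nhds hj)).mono fun _ h _ => h
    · exact Eventually.of_forall fun _ h => absurd h hj
  obtain ⟨N, hN⟩ := ((eventually_all_finset _).2 h).exists
  exact ⟨N, fun j hj => hN j (mem_range.2 hj)⟩

theorem rpow_le_two_rpow_mul_sum_filter {a y q : ℝ} {N : ℕ} (hq : 0 ≤ q) (hy : 0 ≤ y)
    (hya : y ≤ 2 * a) (hN : a / 2 ^ N ≤ y) :
    y ^ q ≤ 2 ^ q * ∑ i ∈ range (N + 1) with a / 2 ^ i ≤ y, (a / 2 ^ i) ^ q := by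
  classical
  have hex : ∃ i, a / 2 ^ i ≤ y := ⟨N, hN⟩
  have ha : 0 ≤ a := by linarith
  have hyi : y ≤ 2 * (a / 2 ^ Nat.find hex) := by
    cases h : Nat.find hex with
    | zero => simpa using hya
    | succ m =>
      have hm := Nat.find_min hex (show m < Nat.find hex by omega)
      rw [pow_succ, ← div_div, mul_div_cancel₀ _ two_ne_zero]
      exact (not_le.1 hm).le
  calc y ^ q ≤ (2 * (a / 2 ^ Nat.find hex)) ^ q := rpow_le_rpow hy hyi hq
    _ = 2 ^ q * (a / 2 ^ Nat.find hex) ^ q := mul_rpow zero_le_two (by positivity)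
    _ ≤ 2 ^ q * ∑ i ∈ range (N + 1) with a / 2 ^ i ≤ y, (a / 2 ^ i) ^ q := by
        gcongr
        refine single_le_sum (f := fun i => (a / 2 ^ i) ^ q) (fun _ _ => by positivity) ?_
        exact mem_filter.2 ⟨mem_range.2 (Nat.lt_succ_of_le (Nat.find_min' hex hN)),
          Nat.find_spec hex⟩

theorem sum_rpow_le_two_rpow_mul_sum_card_mul_rpow {x : ℕ → ℝ} {n N : ℕ} {a q : ℝ}
    (hq : 0 < q) (hx0 : ∀ j < n, 0 ≤ x j) (hxa : ∀ j < n, x j ≤ 2 * a)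
    (hN : ∀ j < n, 0 < x j → a / 2 ^ N ≤ x j) :
    ∑ j ∈ range n, x j ^ q ≤
      2 ^ q * ∑ i ∈ range (N + 1), #{j ∈ range n | a / 2 ^ i ≤ x j} * (a / 2 ^ i) ^ q := by
  calc ∑ j ∈ range n, x j ^ q
      ≤ ∑ j ∈ range n, 2 ^ q * ∑ i ∈ range (N + 1) with a / 2 ^ i ≤ x j, (a / 2 ^ i) ^ q :=
        sum_le_sum fun j hj => by
          rw [mem_range] at hj
          rcases (hx0 j hj).eq_or_lt with h | h
          · have ha : 0 ≤ a := by linarith [hxa j hj]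
            rw [← h, zero_rpow hq.ne']
            positivity
          · exact rpow_le_two_rpow_mul_sum_filter hq.le h.le (hxa j hj) (hN j hj h)
    _ = 2 ^ q * ∑ i ∈ range (N + 1), #{j ∈ range n | a / 2 ^ i ≤ x j} * (a / 2 ^ i) ^ q := by
        simp only [← mul_sum, sum_filter]
        rw [sum_comm]
        simp [← sum_filter]

theorem mul_rpow_le_sup'_rpow {s : Finset ℕ} (hs : s.Nonempty) {f : ℕ → ℝ} {q : ℝ}
    (hq : 0 < q) {k : ℕ} (hk : k ∈ s) (hfk : 0 ≤ f k) :
    k * f k ^ q ≤ (s.sup' hs fun k => (k : ℝ) ^ (1 / q) * f k) ^ q :=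
  calc (k : ℝ) * f k ^ q = ((k : ℝ) ^ (1 / q) * f k) ^ q := by
        rw [mul_rpow (by positivity) hfk, ← rpow_mul k.cast_nonneg, one_div_mul_cancel hq.ne',
          rpow_one]
    _ ≤ _ := rpow_le_rpow (by positivity) (le_sup' (fun k : ℕ => (k : ℝ) ^ (1 / q) * f k) hk) hq.le

structure IsSchrammSequence (φ : ℕ → ℝ → ℝ) : Prop where
  monotoneOn : ∀ j, MonotoneOn (φ j) (Set.Ici 0)
  convexOn : ∀ j, ConvexOn ℝ (Set.Ici 0) (φ j)
  map_zero : ∀ j, φ j 0 = 0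
  succ_le : ∀ j y, 0 < y → φ (j + 1) y ≤ φ j y

namespace IsSchrammSequence

variable {φ : ℕ → ℝ → ℝ}

theorem nonneg (hφ : IsSchrammSequence φ) (j : ℕ) {y : ℝ} (hy : 0 ≤ y) : 0 ≤ φ j y :=
  hφ.map_zero j ▸ hφ.monotoneOn j Set.self_mem_Ici hy hy

theorem antitone (hφ : IsSchrammSequence φ) {y : ℝ} (hy : 0 ≤ y) : Antitone (φ · y) := by
  refine antitone_nat_of_succ_le fun j => ?_
  rcases hy.eq_or_lt with rfl | hy
  · simp [hφ.map_zero]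
  · exact hφ.succ_le j y hy

theorem sum_filter_le_sum (hφ : IsSchrammSequence φ) {x : ℕ → ℝ} {n : ℕ}
    (hx0 : ∀ j < n, 0 ≤ x j) {t : ℝ} (ht : 0 ≤ t) :
    ∑ j ∈ range n with t ≤ x j, φ j t ≤ ∑ j ∈ range n, φ j (x j) :=
  calc ∑ j ∈ range n with t ≤ x j, φ j t ≤ ∑ j ∈ range n with t ≤ x j, φ j (x j) :=
        sum_le_sum fun j hj => (hφ.monotoneOn j) ht (ht.trans (mem_filter.1 hj).2)
          (mem_filter.1 hj).2
    _ ≤ ∑ j ∈ range n, φ j (x j) :=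
        sum_le_sum_of_subset_of_nonneg (filter_subset _ _) fun j hj _ =>
          hφ.nonneg j (hx0 j (mem_range.1 hj))

theorem sum_sum_filter_le (hφ : IsSchrammSequence φ) {x : ℕ → ℝ} {n : ℕ}
    (hx0 : ∀ j < n, 0 ≤ x j) {a : ℝ} (ha : 0 ≤ a) (N : ℕ) :
    ∑ i ∈ range N, ∑ j ∈ range n with a / 2 ^ i ≤ x j, φ j (a / 2 ^ i) ≤
      2 * ∑ j ∈ range n, φ j (x j) := by
  calc ∑ i ∈ range N, ∑ j ∈ range n with a / 2 ^ i ≤ x j, φ j (a / 2 ^ i)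
      = ∑ j ∈ range n, ∑ i ∈ range N with a / 2 ^ i ≤ x j, φ j (a / 2 ^ i) := by
        simp only [sum_filter]
        exact sum_comm
    _ ≤ ∑ j ∈ range n, 2 * φ j (x j) := sum_le_sum fun j hj => by
        have hxj := hx0 j (mem_range.1 hj)
        exact (hφ.convexOn j).sum_filter_div_two_pow_le (hφ.map_zero j) ha hxj (hφ.nonneg j hxj) N
    _ = 2 * ∑ j ∈ range n, φ j (x j) := (mul_sum ..).symm

theorem mul_rpow_le_or_le_inv (hφ : IsSchrammSequence φ) {inv : ℕ → ℝ} {n c : ℕ}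
    {q t V B : ℝ} (hq : 0 ≤ q) (hV : 0 < V) (ht : 0 ≤ t)
    (hle_inv : ∀ k, 1 ≤ k → ∑ j ∈ range k, φ j t ≤ V → t ≤ inv k)
    (hB : ∀ k, 1 ≤ k → k ≤ n → k * inv k ^ q ≤ B)
    (hc : 1 ≤ c) (hcn : c ≤ n) (hcV : ∑ j ∈ range c, φ j t ≤ V) :
    c * t ^ q ≤ 2 * B / V * ∑ j ∈ range c, φ j t ∨ t ≤ inv n := by
  have hw : 0 ≤ ∑ j ∈ range c, φ j t := sum_nonneg fun j _ => hφ.nonneg j ht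
  obtain ⟨k, hck, hkn, hkw, hk⟩ := exists_nat_mul_le_and_le_two_mul hc hcn hw hcV
  have hc0 : (0 : ℝ) < c := by exact_mod_cast hc
  have htk : t ≤ inv k := by
    refine hle_inv k (hc.trans hck) (le_of_mul_le_mul_left ?_ hc0)
    exact ((hφ.antitone ht).mul_sum_range_le hck).trans hkw
  rcases hk with rfl | hk
  · exact .inr htk
  · have hkt : k * t ^ q ≤ B :=
      (mul_le_mul_of_nonneg_left (rpow_le_rpow ht htk hq) k.cast_nonneg).trans
        (hB k (hc.trans hck) hkn)
    left
    rw [div_mul_eq_mul_div, le_div_iff₀ hV]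
    nlinarith [mul_le_mul_of_nonneg_left hk (rpow_nonneg ht q), mul_le_mul_of_nonneg_left hkt hw]

theorem card_filter_mul_rpow_le (hφ : IsSchrammSequence φ) {inv x : ℕ → ℝ} {n : ℕ}
    {q V B t : ℝ} (hq : 0 ≤ q) (hV : 0 < V) (hn : 1 ≤ n)
    (hle_inv : ∀ k, 1 ≤ k → ∑ j ∈ range k, φ j t ≤ V → t ≤ inv k)
    (hB0 : 0 ≤ B) (hB : ∀ k, 1 ≤ k → k ≤ n → k * inv k ^ q ≤ B)
    (hx0 : ∀ j < n, 0 ≤ x j) (hxm : ∀ i j, i ≤ j → j < n → x j ≤ x i)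
    (hsum : ∑ j ∈ range n, φ j (x j) ≤ V) (ht : 0 ≤ t) (htx : t ≤ x 0) :
    #{j ∈ range n | t ≤ x j} * t ^ q ≤
      2 * B / V * ∑ j ∈ range n with t ≤ x j, φ j t +
        if t ≤ inv n then n * t ^ q else 0 := by
  set c := #{j ∈ range n | t ≤ x j}
  have hS : {j ∈ range n | t ≤ x j} = range c :=
    filter_range_eq_range_card fun i j hij hj h => h.trans (hxm i j hij hj)
  have hc : 1 ≤ c := card_pos.2 ⟨0, mem_filter.2 ⟨mem_range.2 hn, htx⟩⟩
  have hcn : c ≤ n := (card_filter_le _ _).trans (card_range n).le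
  have hcV := (hφ.sum_filter_le_sum hx0 ht).trans hsum
  have hw : 0 ≤ 2 * B / V * ∑ j ∈ range n with t ≤ x j, φ j t :=
    mul_nonneg (by positivity) (sum_nonneg fun j _ => hφ.nonneg j ht)
  rw [hS] at hcV hw ⊢
  rcases hφ.mul_rpow_le_or_le_inv hq hV ht hle_inv hB hc hcn hcV with h | h
  · have : 0 ≤ if t ≤ inv n then n * t ^ q else 0 := by split_ifs <;> positivity
    linarith
  · have : (c : ℝ) * t ^ q ≤ n * t ^ q := by gcongr
    rw [if_pos h]
    linarith

theorem sum_card_mul_rpow_le (hφ : IsSchrammSequence φ) {inv x : ℕ → ℝ} {n N : ℕ}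
    {q V B a : ℝ} (hq : 1 ≤ q) (hV : 0 < V) (hn : 1 ≤ n)
    (hle_inv : ∀ k, 1 ≤ k → ∀ t, 0 ≤ t → ∑ j ∈ range k, φ j t ≤ V → t ≤ inv k)
    (hinv : 0 ≤ inv n) (hB : ∀ k, 1 ≤ k → k ≤ n → k * inv k ^ q ≤ B)
    (hx0 : ∀ j < n, 0 ≤ x j) (hxm : ∀ i j, i ≤ j → j < n → x j ≤ x i)
    (hsum : ∑ j ∈ range n, φ j (x j) ≤ V) (ha : 0 ≤ a) (hax : a ≤ x 0) :
    ∑ i ∈ range N, #{j ∈ range n | a / 2 ^ i ≤ x j} * (a / 2 ^ i) ^ q ≤ 6 * B := by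
  have hB0 : 0 ≤ B := (by positivity : 0 ≤ (n : ℝ) * inv n ^ q).trans (hB n hn le_rfl)
  calc ∑ i ∈ range N, #{j ∈ range n | a / 2 ^ i ≤ x j} * (a / 2 ^ i) ^ q
      ≤ ∑ i ∈ range N, (2 * B / V * ∑ j ∈ range n with a / 2 ^ i ≤ x j, φ j (a / 2 ^ i) +
        if a / 2 ^ i ≤ inv n then n * (a / 2 ^ i) ^ q else 0) :=
        sum_le_sum fun i _ => hφ.card_filter_mul_rpow_le (by linarith) hV hn
          (fun k hk => hle_inv k hk _ (by positivity)) hB0 hB hx0 hxm hsum (by positivity)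
          ((div_le_self ha (one_le_pow₀ one_le_two)).trans hax)
    _ = 2 * B / V * ∑ i ∈ range N, ∑ j ∈ range n with a / 2 ^ i ≤ x j, φ j (a / 2 ^ i) +
        n * ∑ i ∈ range N with a / 2 ^ i ≤ inv n, (a / 2 ^ i) ^ q := by
        simp only [sum_add_distrib, mul_sum, sum_filter, mul_ite, mul_zero]
    _ ≤ 2 * B / V * (2 * V) + n * (2 * inv n ^ q) := by
        gcongr
        · exact (hφ.sum_sum_filter_le hx0 ha N).trans (by linarith)
        · exact (convexOn_rpow hq).sum_filter_div_two_pow_le (zero_rpow (by linarith)) ha hinv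
            (by positivity) N
    _ ≤ 6 * B := by
        have := hB n hn le_rfl
        field_simp
        linarith

end IsSchrammSequence

/-- Wu's estimate: for a Schramm sequence `Φ = {φⱼ}` with each `Φ_k = ∑_{j=1}^k φⱼ`
strictly increasing (with `Φ_k⁻¹(V) = inv k`), `q ≥ 1`, and nonnegative nonincreasing
reals `x₁ ≥ … ≥ xₙ ≥ 0` with `∑_{j=1}^n φⱼ(xⱼ) ≤ V`,
`(∑_{j=1}^n xⱼ^q)^(1/q) ≤ 16 · max_{1≤k≤n} k^(1/q) Φ_k⁻¹(V)`. -/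
theorem wu_estimate (φ : ℕ → ℝ → ℝ)
    (hmono : ∀ j, MonotoneOn (φ j) (Set.Ici 0))
    (hconv : ∀ j, ConvexOn ℝ (Set.Ici 0) (φ j))
    (hzero : ∀ j, φ j 0 = 0)
    (hord : ∀ j, ∀ y : ℝ, 0 < y → 0 < φ (j + 1) y ∧ φ (j + 1) y ≤ φ j y)
    (hstrict : ∀ k : ℕ, 1 ≤ k →
      StrictMonoOn (fun y => ∑ j ∈ range k, φ j y) (Set.Ici 0))
    (q : ℝ) (hq : 1 ≤ q) (V : ℝ) (hV : 0 < V)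
    (inv : ℕ → ℝ)
    (hinv : ∀ k : ℕ, 1 ≤ k → 0 ≤ inv k ∧ ∑ j ∈ range k, φ j (inv k) = V)
    (n : ℕ) (hn : 1 ≤ n) (x : ℕ → ℝ)
    (hx0 : ∀ j, j < n → 0 ≤ x j)
    (hxm : ∀ i j, i ≤ j → j < n → x j ≤ x i)
    (hsum : ∑ j ∈ range n, φ j (x j) ≤ V) :
    (∑ j ∈ range n, x j ^ q) ^ (1 / q) ≤
      16 * (Finset.Icc 1 n).sup' (Finset.nonempty_Icc.mpr hn)
        (fun k => (k : ℝ) ^ (1 / q) * inv k) := by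
  have hq0 : 0 < q := by linarith
  set M := (Icc 1 n).sup' (nonempty_Icc.mpr hn) fun k => (k : ℝ) ^ (1 / q) * inv k
  have hB : ∀ k, 1 ≤ k → k ≤ n → (k : ℝ) * inv k ^ q ≤ M ^ q := fun k hk hkn =>
    mul_rpow_le_sup'_rpow _ hq0 (mem_Icc.2 ⟨hk, hkn⟩) (hinv k hk).1
  have hM : 0 ≤ M := by
    have h := le_sup' (fun k : ℕ => (k : ℝ) ^ (1 / q) * inv k) (mem_Icc.2 ⟨le_rfl, hn⟩)
    simp only [Nat.cast_one, one_rpow, one_mul] at h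
    exact (hinv 1 le_rfl).1.trans h
  have hle_inv : ∀ k, 1 ≤ k → ∀ t, 0 ≤ t → ∑ j ∈ range k, φ j t ≤ V → t ≤ inv k :=
    fun k hk t ht h => ((hstrict k hk).le_iff_le ht (hinv k hk).1).1 (h.trans_eq (hinv k hk).2.symm)
  have hφ : IsSchrammSequence φ := ⟨hmono, hconv, hzero, fun j y hy => (hord j y hy).2⟩
  have hx00 : 0 ≤ x 0 := hx0 0 hn
  obtain ⟨N, hN⟩ := exists_div_two_pow_le (x 0 / 2) x n
  rw [one_div, rpow_inv_le_iff_of_pos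
    (sum_nonneg fun j hj => rpow_nonneg (hx0 j (mem_range.1 hj)) q) (by positivity) hq0]
  calc ∑ j ∈ range n, x j ^ q
      ≤ 2 ^ q * ∑ i ∈ range (N + 1),
        #{j ∈ range n | x 0 / 2 / 2 ^ i ≤ x j} * (x 0 / 2 / 2 ^ i) ^ q :=
        sum_rpow_le_two_rpow_mul_sum_card_mul_rpow hq0 hx0
          (fun j hj => by linarith [hxm 0 j j.zero_le hj]) hN
    _ ≤ 2 ^ q * (6 * M ^ q) := by
        gcongr
        exact hφ.sum_card_mul_rpow_le hq hV hn hle_inv (hinv n hn).1 hB hx0 hxm hsum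
          (by positivity) (by linarith)
    _ ≤ 2 ^ q * (8 ^ q * M ^ q) := by
        gcongr
        linarith [self_le_rpow_of_one_le (by norm_num : (1 : ℝ) ≤ 8) hq]
    _ = (16 * M) ^ q := by
        rw [← mul_assoc, ← mul_rpow zero_le_two (by norm_num), ← mul_rpow (by norm_num) hM]
        norm_num
end

section
/- Fix q > 1 and positive nonincreasing sequences {y_j}, {z_j}. Among all nonnegative nonincreasing n-tuples (x_1,…,x_n) with ∑_{j=1}^n x_j y_j = 1, the maximum of ∑_{j=1}^n x_j^q z_j is attained at a tuple of the form x_1 = … = x_k = (∑_{j=1}^k y_j)^{−1}, x_{k+1} = … = x_n = 0 for some 1 ≤ k ≤ n, and hence equals max_{1≤k≤n} (∑_{j=1}^k z_j)(∑_{j=1}^k y_j)^{−q}. -/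
open Finset

/-!
Extend `x` by `0` beyond `n`. Abel summation writes `x` as a combination
`∑ₖ wₖ · stepTuple y (k + 1)` of step tuples with weights `wₖ = (xₖ - xₖ₊₁)(y₀ + ⋯ + yₖ)`,
which are nonnegative because `x` is nonincreasing and sum to `∑ xⱼ yⱼ = 1`. As `t ↦ t ^ q` is
convex for `q ≥ 1` and `z ≥ 0`, Jensen's inequality bounds the objective at `x` by the same convex
combination of its values at the step tuples, hence by their maximum, which a step tuple attains.
-/

theorem Finset.sum_range_ite_lt_mul {R : Type*} [NonUnitalNonAssocSemiring R] {k n : ℕ}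
    (hk : k ≤ n) (a : R) (f : ℕ → R) :
    ∑ j ∈ range n, (if j < k then a else 0) * f j = a * ∑ j ∈ range k, f j := by
  have hhead : ∑ j ∈ range k, (if j < k then a else 0) * f j = a * ∑ j ∈ range k, f j := by
    rw [mul_sum]; exact sum_congr rfl fun j hj => by simp [mem_range.mp hj]
  have htail : ∑ j ∈ Ico k n, (if j < k then a else 0) * f j = 0 :=
    sum_eq_zero fun j hj => by simp [(mem_Ico.mp hj).1]
  rw [← sum_range_add_sum_Ico _ hk, hhead, htail, add_zero]

theorem Finset.sum_range_ite_lt_succ_sub {G : Type*} [AddCommGroup G] {X : ℕ → G} {j n : ℕ}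
    (hXn : X n = 0) (hj : j ≤ n) :
    ∑ k ∈ range n, (if j < k + 1 then X k - X (k + 1) else 0) = X j := by
  have hfilter : {k ∈ range n | j < k + 1} = Ico j n := by ext; simp; omega
  rw [sum_ite, sum_const_zero, add_zero, hfilter]
  simpa [hXn] using congrArg Neg.neg (sum_Ico_sub X hj)

theorem sum_range_pos_of_forall_lt {y : ℕ → ℝ} {k n : ℕ} (hy : ∀ j < n, 0 < y j)
    (hk : 1 ≤ k) (hkn : k ≤ n) : 0 < ∑ i ∈ range k, y i :=
  sum_pos (fun j hj => hy j ((mem_range.mp hj).trans_le hkn)) (nonempty_range_iff.mpr (by omega))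

noncomputable def stepTuple (y : ℕ → ℝ) (k : ℕ) : ℕ → ℝ :=
  fun j => if j < k then (∑ i ∈ range k, y i)⁻¹ else 0

section stepTuple

variable {y : ℕ → ℝ} {k : ℕ}

theorem stepTuple_nonneg (hY : 0 ≤ ∑ i ∈ range k, y i) (j : ℕ) : 0 ≤ stepTuple y k j := by
  unfold stepTuple; split_ifs <;> positivity

theorem stepTuple_antitone (hY : 0 ≤ ∑ i ∈ range k, y i) : Antitone (stepTuple y k) := by
  intro i j hij
  by_cases hj : j < k
  · simp [stepTuple, hj, hij.trans_lt hj]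
  · simpa [stepTuple, hj] using stepTuple_nonneg hY i

theorem sum_stepTuple_mul {n : ℕ} (hk : k ≤ n) (hY : ∑ i ∈ range k, y i ≠ 0) :
    ∑ j ∈ range n, stepTuple y k j * y j = 1 := by
  unfold stepTuple
  rw [sum_range_ite_lt_mul hk, inv_mul_cancel₀ hY]

theorem sum_stepTuple_rpow_mul {n : ℕ} {q : ℝ} (hk : k ≤ n) (hq : q ≠ 0)
    (hY : 0 ≤ ∑ i ∈ range k, y i) (z : ℕ → ℝ) :
    ∑ j ∈ range n, stepTuple y k j ^ q * z j =
      (∑ j ∈ range k, z j) * (∑ j ∈ range k, y j) ^ (-q) := by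
  have hpow : ∀ j, stepTuple y k j ^ q = if j < k then ((∑ i ∈ range k, y i)⁻¹) ^ q else 0 := by
    intro j; unfold stepTuple; split_ifs <;> simp [Real.zero_rpow hq]
  simp only [hpow]
  rw [sum_range_ite_lt_mul hk, Real.inv_rpow hY, ← Real.rpow_neg hY, mul_comm]

end stepTuple

def stepWeight (X y : ℕ → ℝ) (k : ℕ) : ℝ := (X k - X (k + 1)) * ∑ i ∈ range (k + 1), y i

section stepWeight

variable {X y : ℕ → ℝ} {n : ℕ}

theorem stepWeight_nonneg (hX : Antitone X) {k : ℕ} (hY : 0 ≤ ∑ i ∈ range (k + 1), y i) :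
    0 ≤ stepWeight X y k :=
  mul_nonneg (sub_nonneg.mpr (hX k.le_succ)) hY

theorem sum_stepWeight (hXn : X n = 0) :
    ∑ k ∈ range n, stepWeight X y k = ∑ j ∈ range n, X j * y j := by
  calc ∑ k ∈ range n, stepWeight X y k
      = ∑ k ∈ range n, ∑ j ∈ range n, (if j < k + 1 then X k - X (k + 1) else 0) * y j :=
        sum_congr rfl fun k hk => (sum_range_ite_lt_mul (mem_range.mp hk) _ _).symm
    _ = ∑ j ∈ range n, (∑ k ∈ range n, if j < k + 1 then X k - X (k + 1) else 0) * y j := by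
        rw [sum_comm]; simp only [sum_mul]
    _ = ∑ j ∈ range n, X j * y j :=
        sum_congr rfl fun j hj => by rw [sum_range_ite_lt_succ_sub hXn (mem_range.mp hj).le]

theorem sum_stepWeight_mul_stepTuple (hXn : X n = 0)
    (hY : ∀ k < n, ∑ i ∈ range (k + 1), y i ≠ 0) {j : ℕ} (hj : j ≤ n) :
    ∑ k ∈ range n, stepWeight X y k * stepTuple y (k + 1) j = X j := by
  rw [← sum_range_ite_lt_succ_sub hXn hj]
  refine sum_congr rfl fun k hk => ?_
  unfold stepWeight stepTuple
  split_ifs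
  · field_simp [hY k (mem_range.mp hk)]
  · simp

end stepWeight

theorem sum_rpow_mul_le_of_antitone {n : ℕ} {q M : ℝ} (hq : 1 ≤ q) {y z X : ℕ → ℝ}
    (hy : ∀ j < n, 0 < y j) (hz : ∀ j < n, 0 ≤ z j)
    (hX : Antitone X) (hXn : X n = 0) (hsum : ∑ j ∈ range n, X j * y j = 1)
    (hM : ∀ k ∈ Icc 1 n, (∑ j ∈ range k, z j) * (∑ j ∈ range k, y j) ^ (-q) ≤ M) :
    ∑ j ∈ range n, X j ^ q * z j ≤ M := by
  have hY : ∀ k < n, 0 < ∑ i ∈ range (k + 1), y i := fun k hk =>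
    sum_range_pos_of_forall_lt hy (Nat.le_add_left 1 k) hk
  have hw : ∀ k ∈ range n, 0 ≤ stepWeight X y k := fun k hk =>
    stepWeight_nonneg hX (hY k (mem_range.mp hk)).le
  have hw1 : ∑ k ∈ range n, stepWeight X y k = 1 := (sum_stepWeight hXn).trans hsum
  calc ∑ j ∈ range n, X j ^ q * z j
      = ∑ j ∈ range n, (∑ k ∈ range n, stepWeight X y k * stepTuple y (k + 1) j) ^ q * z j :=
        sum_congr rfl fun j hj => by
          rw [sum_stepWeight_mul_stepTuple hXn (fun k hk => (hY k hk).ne') (mem_range.mp hj).le]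
    _ ≤ ∑ j ∈ range n, (∑ k ∈ range n, stepWeight X y k * stepTuple y (k + 1) j ^ q) * z j := by
        refine sum_le_sum fun j hj => mul_le_mul_of_nonneg_right ?_ (hz j (mem_range.mp hj))
        exact Real.rpow_arith_mean_le_arith_mean_rpow _ _ _ hw hw1
          (fun k hk => stepTuple_nonneg (hY k (mem_range.mp hk)).le j) hq
    _ = ∑ k ∈ range n, stepWeight X y k * ∑ j ∈ range n, stepTuple y (k + 1) j ^ q * z j := by
        simp only [sum_mul, mul_sum, mul_assoc]
        exact sum_comm
    _ ≤ ∑ k ∈ range n, stepWeight X y k * M := by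
        refine sum_le_sum fun k hk => mul_le_mul_of_nonneg_left ?_ (hw k hk)
        have hkn := mem_range.mp hk
        rw [sum_stepTuple_rpow_mul hkn (by positivity) (hY k hkn).le]
        exact hM (k + 1) (mem_Icc.mpr ⟨Nat.le_add_left 1 k, hkn⟩)
    _ = M := by rw [← sum_mul, hw1, one_mul]

theorem antitone_ite_lt {x : ℕ → ℝ} {n : ℕ} (hx0 : ∀ j < n, 0 ≤ x j)
    (hxm : ∀ i j, i ≤ j → j < n → x j ≤ x i) : Antitone fun j => if j < n then x j else 0 := by
  intro i j hij
  by_cases hj : j < n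
  · simpa [hj, hij.trans_lt hj] using hxm i j hij hj
  · by_cases hi : i < n <;> simp [hi, hj, hx0]

theorem extremal_problem_general (n : ℕ) (hn : 1 ≤ n) (q : ℝ) (hq : 1 < q)
    (y z : ℕ → ℝ)
    (hy : ∀ j, j < n → 0 < y j) (hz : ∀ j, j < n → 0 < z j) :
    IsGreatest {S : ℝ | ∃ x : ℕ → ℝ,
        (∀ j, j < n → 0 ≤ x j) ∧
        (∀ i j, i ≤ j → j < n → x j ≤ x i) ∧
        (∑ j ∈ range n, x j * y j) = 1 ∧
        S = ∑ j ∈ range n, x j ^ q * z j}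
      ((Finset.Icc 1 n).sup' (Finset.nonempty_Icc.mpr hn)
        (fun k => (∑ j ∈ range k, z j) * (∑ j ∈ range k, y j) ^ (-q))) ∧
    ∃ k : ℕ, 1 ≤ k ∧ k ≤ n ∧
      (∑ j ∈ range n,
          (if j < k then (∑ i ∈ range k, y i)⁻¹ else 0) ^ q * z j) =
        (Finset.Icc 1 n).sup' (Finset.nonempty_Icc.mpr hn)
          (fun k => (∑ j ∈ range k, z j) * (∑ j ∈ range k, y j) ^ (-q)) := by
  obtain ⟨k, hk, hmax⟩ := exists_mem_eq_sup' (nonempty_Icc.mpr hn)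
    (fun k => (∑ j ∈ range k, z j) * (∑ j ∈ range k, y j) ^ (-q))
  obtain ⟨hk1, hkn⟩ := mem_Icc.mp hk
  have hY := sum_range_pos_of_forall_lt hy hk1 hkn
  have hvalue : ∑ j ∈ range n, stepTuple y k j ^ q * z j = _ :=
    (sum_stepTuple_rpow_mul hkn (by positivity) hY.le z).trans hmax.symm
  refine ⟨⟨⟨stepTuple y k, fun j _ => stepTuple_nonneg hY.le j,
    fun i j hij _ => stepTuple_antitone hY.le hij, sum_stepTuple_mul hkn hY.ne', hvalue.symm⟩,
    ?_⟩, k, hk1, hkn, hvalue⟩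
  rintro S ⟨x, hx0, hxm, hsum, rfl⟩
  let X : ℕ → ℝ := fun j => if j < n then x j else 0
  have hXx : ∀ j ∈ range n, X j = x j := fun j hj => if_pos (mem_range.mp hj)
  have hXsum : ∑ j ∈ range n, X j * y j = 1 :=
    hsum ▸ sum_congr rfl fun j hj => by rw [hXx j hj]
  calc ∑ j ∈ range n, x j ^ q * z j = ∑ j ∈ range n, X j ^ q * z j :=
        sum_congr rfl fun j hj => by rw [hXx j hj]
    _ ≤ _ := sum_rpow_mul_le_of_antitone hq.le hy (fun j hj => (hz j hj).le)
        (antitone_ite_lt hx0 hxm) (by simp [X])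
        hXsum fun k hk => le_sup' (fun k => (∑ j ∈ range k, z j) * (∑ j ∈ range k, y j) ^ (-q)) hk

/-- The extremal problem in the proof of Proposition 2.1: for `q > 1` and positive
nonincreasing `y, z`, the maximum of `∑ xⱼ^q zⱼ` over nonnegative nonincreasing tuples `x`
with `∑ xⱼ yⱼ = 1` equals `max_{1≤k≤n} (∑_{j≤k} zⱼ)(∑_{j≤k} yⱼ)^(-q)`, and it is attained
at a tuple of the form `x₁ = … = x_k = (∑_{j≤k} yⱼ)⁻¹`, `x_{k+1} = … = xₙ = 0`. -/
theorem extremal_problem (n : ℕ) (hn : 1 ≤ n) (q : ℝ) (hq : 1 < q)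
    (y z : ℕ → ℝ)
    (hy : ∀ j, j < n → 0 < y j) (hz : ∀ j, j < n → 0 < z j)
    (hym : ∀ i j, i ≤ j → j < n → y j ≤ y i)
    (hzm : ∀ i j, i ≤ j → j < n → z j ≤ z i) :
    IsGreatest {S : ℝ | ∃ x : ℕ → ℝ,
        (∀ j, j < n → 0 ≤ x j) ∧
        (∀ i j, i ≤ j → j < n → x j ≤ x i) ∧
        (∑ j ∈ range n, x j * y j) = 1 ∧
        S = ∑ j ∈ range n, x j ^ q * z j}
      ((Finset.Icc 1 n).sup' (Finset.nonempty_Icc.mpr hn)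
        (fun k => (∑ j ∈ range k, z j) * (∑ j ∈ range k, y j) ^ (-q))) ∧
    ∃ k : ℕ, 1 ≤ k ∧ k ≤ n ∧
      (∑ j ∈ range n,
          (if j < k then (∑ i ∈ range k, y i)⁻¹ else 0) ^ q * z j) =
        (Finset.Icc 1 n).sup' (Finset.nonempty_Icc.mpr hn)
          (fun k => (∑ j ∈ range k, z j) * (∑ j ∈ range k, y j) ^ (-q)) :=
  extremal_problem_general n hn q hq y z hy hz
end

section
/- Let Λ, Γ be Waterman sequences such that {Γ(n)/Λ(n)} is nondecreasing, let 1 ≤ q_n ≤ p, and let {I_j}_{j=1}^s be nonoverlapping intervals. Then for any f, ∑_{j=1}^s |f(I_j)|^{q_n}/γ_j ≤ (∑_{j=1}^s |f(I_j)|^p/λ_j)^{q_n/p} · max_{1≤k≤s} Γ(k) Λ(k)^{−q_n/p}. -/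
/-!
Write `t = r / p ∈ (0, 1]`, `Γ = Γ(s)`, `Λ = Λ(s)`. Since `Γ(k)/Λ(k)` increases, `Γ(k) ≤ (Γ/Λ) Λ(k)`
for every `k ≤ s`, and Abel summation against the nonincreasing sequence `aⱼ^p` upgrades this to
`∑ aⱼ^p/γⱼ ≤ (Γ/Λ) ∑ aⱼ^p/λⱼ`. Jensen's inequality for the concave map `x ↦ x^t`, with the
probability weights `1/(Γ γⱼ)`, gives `∑ aⱼ^r/γⱼ ≤ Γ (∑ aⱼ^p/(Γ γⱼ))^t ≤ Γ Λ^(-t) (∑ aⱼ^p/λⱼ)^t`,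
which is the term `k = s` of the maximum.
-/

open Finset

theorem sum_range_mul_le_of_sum_range_le {u v b : ℕ → ℝ} {s : ℕ}
    (huv : ∀ k ≤ s, ∑ j ∈ range k, u j ≤ ∑ j ∈ range k, v j)
    (hb0 : ∀ j < s, 0 ≤ b j) (hb : ∀ i j, i ≤ j → j < s → b j ≤ b i) :
    ∑ j ∈ range s, u j * b j ≤ ∑ j ∈ range s, v j * b j := by
  induction s generalizing b with
  | zero => simp
  | succ n ih =>
    have split : ∀ w : ℕ → ℝ, ∑ j ∈ range (n + 1), w j * b j =
        ∑ j ∈ range n, w j * (b j - b n) + (∑ j ∈ range (n + 1), w j) * b n := by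
      intro w
      simp only [mul_sub, sum_sub_distrib, sum_range_succ, ← sum_mul]
      ring
    have head := ih (b := fun j => b j - b n) (fun k hk => huv k (by omega))
      (fun j hj => sub_nonneg.2 (hb j n hj.le (by omega)))
      (fun i j hij hj => sub_le_sub_right (hb i j hij (by omega)) _)
    have tail := mul_le_mul_of_nonneg_right (huv (n + 1) le_rfl) (hb0 n (by omega))
    rw [split u, split v]
    exact add_le_add head tail

theorem sum_range_le_mul_of_monotone_div {g l : ℕ → ℝ} (hl : ∀ j, 0 < l j)
    (hratio : Monotone fun n => (∑ j ∈ range (n + 1), g j) / ∑ j ∈ range (n + 1), l j)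
    {k s : ℕ} (hks : k ≤ s) :
    ∑ j ∈ range k, g j ≤ (∑ j ∈ range s, g j) / (∑ j ∈ range s, l j) * ∑ j ∈ range k, l j := by
  obtain rfl | hk := Nat.eq_zero_or_pos k
  · simp
  have hL : 0 < ∑ j ∈ range k, l j := sum_pos (fun j _ => hl j) (nonempty_range_iff.2 hk.ne')
  have h := hratio (show k - 1 ≤ s - 1 by omega)
  simp only [Nat.sub_add_cancel hk, Nat.sub_add_cancel (hk.trans_le hks)] at h
  rwa [← div_le_iff₀ hL]

theorem sum_range_mul_le_div_mul_sum_of_monotone_div {g l b : ℕ → ℝ} (hl : ∀ j, 0 < l j)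
    (hratio : Monotone fun n => (∑ j ∈ range (n + 1), g j) / ∑ j ∈ range (n + 1), l j)
    {s : ℕ} (hb0 : ∀ j < s, 0 ≤ b j) (hb : ∀ i j, i ≤ j → j < s → b j ≤ b i) :
    ∑ j ∈ range s, g j * b j ≤
      (∑ j ∈ range s, g j) / (∑ j ∈ range s, l j) * ∑ j ∈ range s, l j * b j := calc
  _ ≤ ∑ j ∈ range s, (∑ j ∈ range s, g j) / (∑ j ∈ range s, l j) * l j * b j :=
    sum_range_mul_le_of_sum_range_le
      (fun k hk => (sum_range_le_mul_of_monotone_div hl hratio hk).trans_eq (mul_sum _ _ _)) hb0 hb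
  _ = _ := by
    rw [mul_sum]
    exact sum_congr rfl fun j _ => mul_assoc _ _ _

theorem sum_mul_rpow_le_of_le_one {ι : Type*} (S : Finset ι) {w x : ι → ℝ}
    (hw : ∀ i ∈ S, 0 ≤ w i) (hx : ∀ i ∈ S, 0 ≤ x i) (hW : 0 < ∑ i ∈ S, w i)
    {t : ℝ} (ht0 : 0 ≤ t) (ht1 : t ≤ 1) :
    ∑ i ∈ S, w i * x i ^ t ≤ (∑ i ∈ S, w i) * ((∑ i ∈ S, w i * x i) / ∑ i ∈ S, w i) ^ t := by
  set W := ∑ i ∈ S, w i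
  have normalize : ∀ y : ι → ℝ, ∑ i ∈ S, (w i / W) • y i = (∑ i ∈ S, w i * y i) / W := by
    intro y
    simp only [smul_eq_mul, sum_div, div_mul_eq_mul_div]
  have jensen := (Real.concaveOn_rpow ht0 ht1).le_map_sum (t := S) (w := fun i => w i / W)
    (p := x) (fun i hi => div_nonneg (hw i hi) hW.le)
    (by rw [← sum_div, div_self hW.ne']) hx
  rw [normalize, normalize, div_le_iff₀ hW] at jensen
  linarith

theorem sum_range_mul_rpow_le_of_monotone_div {g l a : ℕ → ℝ} (hg : ∀ j, 0 < g j)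
    (hl : ∀ j, 0 < l j)
    (hratio : Monotone fun n => (∑ j ∈ range (n + 1), g j) / ∑ j ∈ range (n + 1), l j)
    {p r : ℝ} (hr : 0 < r) (hrp : r ≤ p) {s : ℕ} (hs : s ≠ 0)
    (ha0 : ∀ j < s, 0 ≤ a j) (ha : ∀ i j, i ≤ j → j < s → a j ≤ a i) :
    ∑ j ∈ range s, g j * a j ^ r ≤
      (∑ j ∈ range s, l j * a j ^ p) ^ (r / p) *
        ((∑ j ∈ range s, g j) * (∑ j ∈ range s, l j) ^ (-(r / p))) := by
  have hp : 0 < p := hr.trans_le hrp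
  have hG : 0 < ∑ j ∈ range s, g j := sum_pos (fun j _ => hg j) (nonempty_range_iff.2 hs)
  have hL : 0 < ∑ j ∈ range s, l j := sum_pos (fun j _ => hl j) (nonempty_range_iff.2 hs)
  set G := ∑ j ∈ range s, g j
  set L := ∑ j ∈ range s, l j
  set B := ∑ j ∈ range s, l j * a j ^ p
  have hap : ∀ j ∈ range s, 0 ≤ a j ^ p := fun j hj => Real.rpow_nonneg (ha0 j (mem_range.1 hj)) p
  have hB : 0 ≤ B := sum_nonneg fun j hj => mul_nonneg (hl j).le (hap j hj)
  have cheb : ∑ j ∈ range s, g j * a j ^ p ≤ G / L * B :=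
    sum_range_mul_le_div_mul_sum_of_monotone_div hl hratio (fun j hj => hap j (mem_range.2 hj))
      (fun i j hij hj => Real.rpow_le_rpow (ha0 j hj) (ha i j hij hj) hp.le)
  calc ∑ j ∈ range s, g j * a j ^ r
      = ∑ j ∈ range s, g j * (a j ^ p) ^ (r / p) := by
        refine sum_congr rfl fun j hj => ?_
        rw [← Real.rpow_mul (ha0 j (mem_range.1 hj)), mul_div_cancel₀ r hp.ne']
    _ ≤ G * ((∑ j ∈ range s, g j * a j ^ p) / G) ^ (r / p) :=
        sum_mul_rpow_le_of_le_one _ (fun j _ => (hg j).le) hap hG (by positivity)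
          ((div_le_one hp).2 hrp)
    _ ≤ G * (G / L * B / G) ^ (r / p) := by
        gcongr
        exact div_nonneg (sum_nonneg fun j hj => mul_nonneg (hg j).le (hap j hj)) hG.le
    _ = B ^ (r / p) * (G * L ^ (-(r / p))) := by
        rw [show G / L * B / G = B / L by field_simp, Real.div_rpow hB hL.le, Real.rpow_neg hL.le]
        ring

theorem ratio_monotone_estimate_general (lam gam : ℕ → ℝ)
    (hlam : ∀ j, 0 < lam j) (hgam : ∀ j, 0 < gam j)
    (hratio : Monotone (fun n =>
      (∑ j ∈ range (n + 1), 1 / gam j) / (∑ j ∈ range (n + 1), 1 / lam j)))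
    (p r : ℝ) (hr : 1 ≤ r) (hrp : r ≤ p)
    (s : ℕ) (hs : 1 ≤ s) (a : ℕ → ℝ)
    (ha0 : ∀ j, j < s → 0 ≤ a j)
    (ham : ∀ i j, i ≤ j → j < s → a j ≤ a i) :
    ∑ j ∈ range s, a j ^ r / gam j ≤
      (∑ j ∈ range s, a j ^ p / lam j) ^ (r / p) *
        (Finset.Icc 1 s).sup' (Finset.nonempty_Icc.mpr hs)
          (fun k => (∑ j ∈ range k, 1 / gam j) *
            (∑ j ∈ range k, 1 / lam j) ^ (-(r / p))) := by
  have key := sum_range_mul_rpow_le_of_monotone_div (a := a) (fun j => one_div_pos.2 (hgam j))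
    (fun j => one_div_pos.2 (hlam j)) hratio (by linarith) hrp (by omega) ha0 ham
  simp only [one_div_mul_eq_div] at key
  refine key.trans (mul_le_mul_of_nonneg_left ?_ ?_)
  · exact le_sup' (fun k => (∑ j ∈ range k, 1 / gam j) * (∑ j ∈ range k, 1 / lam j) ^ (-(r / p)))
      (mem_Icc.2 ⟨hs, le_rfl⟩)
  · exact Real.rpow_nonneg
      (sum_nonneg fun j hj => div_nonneg (Real.rpow_nonneg (ha0 j (mem_range.1 hj)) p) (hlam j).le) _

/-- The key estimate in the second part of Theorem 1.4: if `Λ, Γ` are nondecreasing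
positive sequences with `Γ(n)/Λ(n)` nondecreasing and `1 ≤ r ≤ p` (with `r = qₙ`), then
for nonnegative reals `a₁ ≥ … ≥ a_s` (the values `|f(Iⱼ)|` arranged in nonincreasing
order), `∑ aⱼ^r/γⱼ ≤ (∑ aⱼ^p/λⱼ)^(r/p) · max_{1≤k≤s} Γ(k) Λ(k)^(-r/p)`. -/
theorem ratio_monotone_estimate (lam gam : ℕ → ℝ)
    (hlam : ∀ j, 0 < lam j) (hgam : ∀ j, 0 < gam j)
    (hlammono : Monotone lam) (hgammono : Monotone gam)
    (hratio : Monotone (fun n =>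
      (∑ j ∈ range (n + 1), 1 / gam j) / (∑ j ∈ range (n + 1), 1 / lam j)))
    (p r : ℝ) (hr : 1 ≤ r) (hrp : r ≤ p)
    (s : ℕ) (hs : 1 ≤ s) (a : ℕ → ℝ)
    (ha0 : ∀ j, j < s → 0 ≤ a j)
    (ham : ∀ i j, i ≤ j → j < s → a j ≤ a i) :
    ∑ j ∈ range s, a j ^ r / gam j ≤
      (∑ j ∈ range s, a j ^ p / lam j) ^ (r / p) *
        (Finset.Icc 1 s).sup' (Finset.nonempty_Icc.mpr hs)
          (fun k => (∑ j ∈ range k, 1 / gam j) *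
            (∑ j ∈ range k, 1 / lam j) ^ (-(r / p))) :=
  ratio_monotone_estimate_general lam gam hlam hgam hratio p r hr hrp s hs a ha0 ham
end
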